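/- arXiv:2504.20968 — 6 statements merged into one kernel-verified Lean document; each statement's English description precedes it below -/
import Mathlib

section
/- For any digraph X = (V, E) and every coloring f : V → ℤ⁺, the number of (f, X)-friendly V-listings equals the number of (f, X^op)-friendly V-listings, i.e. N(f, X) = N(f, X^op). (Equivalently, the noncommutative Redei–Berge functions satisfy W_X = W_{X^op}.) -/
section Block
variable {n : ℕ} (g : Fin n → ℕ+)

noncomputable def blockMin (i : Fin n) : Fin n :=
  Finset.min' (Finset.univ.filter fun j => g j = g i) ⟨i, by simp⟩

noncomputable def blockMax (i : Fin n) : Fin n :=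
  Finset.max' (Finset.univ.filter fun j => g j = g i) ⟨i, by simp⟩

lemma blockMin_le (i : Fin n) : blockMin g i ≤ i := Finset.min'_le _ _ (by simp)

lemma le_blockMax (i : Fin n) : i ≤ blockMax g i := Finset.le_max' _ _ (by simp)

lemma g_blockMin (i : Fin n) : g (blockMin g i) = g i := by
  have := Finset.min'_mem (Finset.univ.filter fun j => g j = g i) ⟨i, by simp⟩
  simpa [blockMin] using this

lemma g_blockMax (i : Fin n) : g (blockMax g i) = g i := by
  have := Finset.max'_mem (Finset.univ.filter fun j => g j = g i) ⟨i, by simp⟩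
  simpa [blockMax] using this

lemma blockMin_congr {i j : Fin n} (h : g i = g j) : blockMin g i = blockMin g j := by
  unfold blockMin
  congr 1
  ext k
  simp [h]

lemma blockMax_congr {i j : Fin n} (h : g i = g j) : blockMax g i = blockMax g j := by
  unfold blockMax
  congr 1
  ext k
  simp [h]

noncomputable def blockRefl (i : Fin n) : Fin n :=
  ⟨(blockMin g i : ℕ) + (blockMax g i : ℕ) - (i : ℕ), by
    have h1 : (blockMin g i : ℕ) ≤ i := blockMin_le g i
    have h2 : (i : ℕ) ≤ blockMax g i := le_blockMax g i
    have := (blockMax g i).isLt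
    omega⟩

lemma blockMin_le_blockRefl (i : Fin n) : blockMin g i ≤ blockRefl g i := by
  have h1 : (blockMin g i : ℕ) ≤ i := blockMin_le g i
  have h2 : (i : ℕ) ≤ blockMax g i := le_blockMax g i
  simp only [blockRefl, Fin.le_def]
  omega

lemma blockRefl_le_blockMax (i : Fin n) : blockRefl g i ≤ blockMax g i := by
  have h1 : (blockMin g i : ℕ) ≤ i := blockMin_le g i
  have h2 : (i : ℕ) ≤ blockMax g i := le_blockMax g i
  simp only [blockRefl, Fin.le_def]
  omega

lemma g_blockRefl (hg : Monotone g) (i : Fin n) : g (blockRefl g i) = g i := by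
  have h1 := hg (blockMin_le_blockRefl g i)
  have h2 := hg (blockRefl_le_blockMax g i)
  rw [g_blockMin g i] at h1
  rw [g_blockMax g i] at h2
  exact le_antisymm h2 h1

lemma blockRefl_involutive (hg : Monotone g) : Function.Involutive (blockRefl g) := by
  intro i
  have hgi := g_blockRefl g hg i
  have hmin : blockMin g (blockRefl g i) = blockMin g i := blockMin_congr g hgi
  have hmax : blockMax g (blockRefl g i) = blockMax g i := blockMax_congr g hgi
  have h1 : (blockMin g i : ℕ) ≤ i := blockMin_le g i
  have h2 : (i : ℕ) ≤ blockMax g i := le_blockMax g i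
  have key : (blockRefl g (blockRefl g i) : ℕ) =
      (blockMin g (blockRefl g i) : ℕ) + (blockMax g (blockRefl g i) : ℕ) - (blockRefl g i : ℕ) :=
    rfl
  rw [hmin, hmax] at key
  have hv : (blockRefl g i : ℕ) = (blockMin g i : ℕ) + (blockMax g i : ℕ) - (i : ℕ) := rfl
  apply Fin.ext
  rw [key, hv]
  omega

end Block



/-- A `V`-listing `σ` (a bijection `Fin n ≃ V`) is `(f, X)`-friendly for the digraph with
edge set `E` and the coloring `f` if the colors are weakly increasing along the listing,
and strictly increase along every edge of the digraph. -/
def Friendly {V : Type*} [Fintype V] (E : Set (V × V)) (f : V → ℕ+)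
    (σ : Fin (Fintype.card V) ≃ V) : Prop :=
  Monotone (fun i => f (σ i)) ∧
  ∀ i : Fin (Fintype.card V), ∀ h : (i : ℕ) + 1 < Fintype.card V,
    (σ i, σ ⟨(i : ℕ) + 1, h⟩) ∈ E → f (σ i) < f (σ ⟨(i : ℕ) + 1, h⟩)

/-- `redeiBergeCount E f` is `N(f, X)`, the number of `(f, X)`-friendly `V`-listings
of the digraph `X = (V, E)`. -/
noncomputable def redeiBergeCount {V : Type*} [Fintype V] (E : Set (V × V)) (f : V → ℕ+) : ℕ :=
  Nat.card {σ : Fin (Fintype.card V) ≃ V // Friendly E f σ}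

section Main
variable {V : Type*} [Fintype V] (f : V → ℕ+)

/-- Reverse each maximal constant-color block of the listing `σ`. -/
noncomputable def flipPerm (σ : Fin (Fintype.card V) ≃ V)
    (hσ : Monotone fun i => f (σ i)) : Fin (Fintype.card V) ≃ V :=
  (Function.Involutive.toPerm _ (blockRefl_involutive (fun i => f (σ i)) hσ)).trans σ

lemma flipPerm_apply (σ : Fin (Fintype.card V) ≃ V) (hσ : Monotone fun i => f (σ i))
    (i : Fin (Fintype.card V)) :
    flipPerm f σ hσ i = σ (blockRefl (fun j => f (σ j)) i) := rfl

lemma f_flipPerm (σ : Fin (Fintype.card V) ≃ V) (hσ : Monotone fun i => f (σ i))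
    (i : Fin (Fintype.card V)) : f (flipPerm f σ hσ i) = f (σ i) :=
  g_blockRefl (fun j => f (σ j)) hσ i

lemma flipPerm_friendly (E : Set (V × V)) (σ : Fin (Fintype.card V) ≃ V)
    (hσ : Friendly E f σ) :
    Friendly {p : V × V | (p.2, p.1) ∈ E} f (flipPerm f σ hσ.1) := by
  set g := fun i => f (σ i) with hg
  have hgf : (fun i => f (flipPerm f σ hσ.1 i)) = g := funext fun i => g_blockRefl g hσ.1 i
  constructor
  · rw [hgf]; exact hσ.1
  · intro i h hmem
    by_contra hlt
    push_neg at hlt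
    rw [f_flipPerm f σ hσ.1 ⟨(i : ℕ) + 1, h⟩, f_flipPerm f σ hσ.1 i] at hlt
    have hle : g i ≤ g ⟨(i : ℕ) + 1, h⟩ := hσ.1 (by simp [Fin.le_def])
    have heq : g i = g ⟨(i : ℕ) + 1, h⟩ := le_antisymm hle hlt
    have hmin : blockMin g i = blockMin g ⟨(i : ℕ) + 1, h⟩ := blockMin_congr g heq
    have hmax : blockMax g i = blockMax g ⟨(i : ℕ) + 1, h⟩ := blockMax_congr g heq
    have b1 : (blockMin g i : ℕ) ≤ (i : ℕ) := blockMin_le g i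
    have b2 : ((⟨(i : ℕ) + 1, h⟩ : Fin (Fintype.card V)) : ℕ) ≤
        (blockMax g ⟨(i : ℕ) + 1, h⟩ : ℕ) := le_blockMax g _
    have r1 : (blockRefl g i : ℕ) = (blockMin g i : ℕ) + (blockMax g i : ℕ) - (i : ℕ) := rfl
    have r2 : (blockRefl g ⟨(i : ℕ) + 1, h⟩ : ℕ) =
        (blockMin g ⟨(i : ℕ) + 1, h⟩ : ℕ) + (blockMax g ⟨(i : ℕ) + 1, h⟩ : ℕ) - ((i : ℕ) + 1) :=
      rfl
    have hval : (blockRefl g ⟨(i : ℕ) + 1, h⟩ : ℕ) + 1 = (blockRefl g i : ℕ) := by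
      rw [r1, r2, hmin, hmax]
      rw [hmin] at b1
      simp only [] at b2
      omega
    have hlt' : (blockRefl g ⟨(i : ℕ) + 1, h⟩ : ℕ) + 1 < Fintype.card V := by
      rw [hval]; exact (blockRefl g i).isLt
    have hfin : (⟨(blockRefl g ⟨(i : ℕ) + 1, h⟩ : ℕ) + 1, hlt'⟩ : Fin (Fintype.card V)) =
        blockRefl g i := Fin.ext hval
    have key := hσ.2 (blockRefl g ⟨(i : ℕ) + 1, h⟩) hlt' (by rw [hfin]; exact hmem)
    rw [hfin] at key
    have c1 : f (σ (blockRefl g ⟨(i : ℕ) + 1, h⟩)) = g ⟨(i : ℕ) + 1, h⟩ :=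
      g_blockRefl g hσ.1 _
    have c2 : f (σ (blockRefl g i)) = g i := g_blockRefl g hσ.1 _
    rw [c1, c2] at key
    exact not_lt.2 heq.le key

noncomputable def flipMap (E : Set (V × V)) :
    {σ : Fin (Fintype.card V) ≃ V // Friendly E f σ} →
    {σ : Fin (Fintype.card V) ≃ V // Friendly {p : V × V | (p.2, p.1) ∈ E} f σ} :=
  fun s => ⟨flipPerm f s.1 s.2.1, flipPerm_friendly f E s.1 s.2⟩

lemma flipMap_injective (E : Set (V × V)) : Function.Injective (flipMap f E) := by
  intro s t hst
  have h : flipPerm f s.1 s.2.1 = flipPerm f t.1 t.2.1 := congrArg Subtype.val hst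
  set gs := fun i => f (s.1 i) with hgs
  set gt := fun i => f (t.1 i) with hgt
  have hgeq : gs = gt := by
    funext i
    have e1 : f (flipPerm f s.1 s.2.1 i) = gs i := f_flipPerm f s.1 s.2.1 i
    have e2 : f (flipPerm f t.1 t.2.1 i) = gt i := f_flipPerm f t.1 t.2.1 i
    rw [← e1, ← e2, h]
  apply Subtype.ext
  apply Equiv.ext
  intro i
  have h1 := congrFun (congrArg (fun (e : Fin (Fintype.card V) ≃ V) => (e : Fin _ → V)) h)
      (blockRefl gs i)
  simp only [flipPerm_apply] at h1
  rw [← hgs, ← hgt] at h1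
  rw [blockRefl_involutive gs s.2.1 i] at h1
  rw [← hgeq, blockRefl_involutive gs s.2.1 i] at h1
  exact h1

end Main

/-- For any digraph `X = (V, E)` and coloring `f`, the number of friendly listings for `X`
equals the number of friendly listings for the opposite digraph `X^op`. -/
theorem redeiBergeCount_opposite {V : Type*} [Fintype V] (E : Set (V × V)) (f : V → ℕ+) :
    redeiBergeCount E f = redeiBergeCount {p : V × V | (p.2, p.1) ∈ E} f := by
  haveI : Finite (Fin (Fintype.card V) ≃ V) :=
    Finite.of_injective (fun e => (e : Fin (Fintype.card V) → V))
      (fun a b hab => Equiv.coe_fn_injective hab)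
  have hset : {p : V × V | (p.2, p.1) ∈ {p : V × V | (p.2, p.1) ∈ E}} = E := by
    ext ⟨a, b⟩; simp
  have i1 := Nat.card_le_card_of_injective _ (flipMap_injective f E)
  have i2 := Nat.card_le_card_of_injective _
    (flipMap_injective f {p : V × V | (p.2, p.1) ∈ E})
  rw [hset] at i2
  exact le_antisymm i1 i2
end

section
/- Deletion-contraction: let X = (V, E) be a digraph and let e = (u, v) ∈ E with u ≠ v. Then for every coloring f : V → ℤ⁺: N(f, X) = N(f, X∖e) − N(f̃, X/e) if f(u) = f(v), and N(f, X) = N(f, X∖e) if f(u) ≠ f(v); here f̃ : V' → ℤ⁺ is the coloring of the contracted digraph X/e = (V', E') given by f̃(w) = f(w) for w ∈ V∖{u, v} and f̃(ε) = f(u) = f(v) on the new vertex ε. (Equivalently, W_X = W_{X∖e} − W_{X/e}↑ in noncommuting variables.) -/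
/-- The vertex set of the contraction `X/e` for `e = (u, v)`: the vertices different from
`u` and `v`, together with one new vertex `ε` (represented as `none`). -/
abbrev ContractedVertices {V : Type*} [DecidableEq V] (u v : V) :=
  Option {w : V // w ≠ u ∧ w ≠ v}

/-- The edge set of the contraction `X/e` for `e = (u, v)`: all edges of `E` between
vertices different from `u, v`; moreover `(w, ε)` is an edge iff `(w, u) ∈ E`, and
`(ε, w)` is an edge iff `(v, w) ∈ E`. -/
def contractEdges {V : Type*} [DecidableEq V] (E : Set (V × V)) (u v : V) :
    Set (ContractedVertices u v × ContractedVertices u v) :=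
  {p | match p with
    | (some a, some b) => ((a : V), (b : V)) ∈ E
    | (some a, none) => ((a : V), u) ∈ E
    | (none, some b) => (v, (b : V)) ∈ E
    | (none, none) => False}

/-- The coloring `f̃` of the contracted digraph induced by `f`: it agrees with `f` away
from `u, v`, and colors the new vertex `ε` with `f u`. -/
def contractColoring {V : Type*} [DecidableEq V] (f : V → ℕ+) (u v : V) :
    ContractedVertices u v → ℕ+
  | some a => f (a : V)
  | none => f u

namespace RB

variable {V : Type*} [DecidableEq V] {u v : V}

def valCV : ContractedVertices u v → V
  | some a => (a : V)
  | none => u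

def toCV (u v : V) (w : V) : ContractedVertices u v :=
  if h : w ≠ u ∧ w ≠ v then some ⟨w, h⟩ else none

lemma toCV_pos {w : V} (h : w ≠ u ∧ w ≠ v) : toCV u v w = some ⟨w, h⟩ := dif_pos h

lemma toCV_eq_some {w : V} {a} (h : toCV u v w = some a) : w = (a : V) := by
  unfold toCV at h; split at h
  · exact congrArg Subtype.val (Option.some.inj h) |>.symm ▸ rfl
  · simp_all

lemma toCV_eq_none {w : V} (h : toCV u v w = none) : w = u ∨ w = v := by
  unfold toCV at h; split at h <;> simp_all <;> tauto

lemma toCV_u : toCV u v u = none := dif_neg (by tauto)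
lemma toCV_v : toCV u v v = none := dif_neg (by tauto)

lemma valCV_toCV {w : V} (hw : w ≠ v) : valCV (toCV u v w) = w := by
  unfold toCV; split
  · rfl
  · next h =>
    have : w = u := by tauto
    simp [valCV, this]

lemma toCV_valCV_some (a : {w : V // w ≠ u ∧ w ≠ v}) : toCV u v (valCV (some a)) = some a := by
  simp [valCV, toCV_pos a.2]

lemma valCV_ne_v (hne : u ≠ v) (o : ContractedVertices u v) : valCV o ≠ v := by
  cases o with
  | none => exact hne
  | some a => exact a.2.2

lemma valCV_inj : Function.Injective (valCV (u := u) (v := v)) := by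
  intro o o' h
  cases o with
  | none => cases o' with
    | none => rfl
    | some a => exact absurd h.symm a.2.1
  | some a => cases o' with
    | none => exact absurd h a.2.1
    | some b => simpa [valCV, Subtype.ext_iff] using h

lemma contractColoring_eq (f : V → ℕ+) (o : ContractedVertices u v) :
    contractColoring f u v o = f (valCV o) := by cases o <;> rfl

lemma contractColoring_toCV {f : V → ℕ+} (hf : f u = f v) (w : V) :
    contractColoring f u v (toCV u v w) = f w := by
  unfold toCV; split
  · rfl
  · next h =>
    rcases Decidable.em (w = u) with h1 | h1
    · simp [contractColoring, h1]
    · have : w = v := by tauto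
      simp [contractColoring, this, hf]

def cvEquiv (hne : u ≠ v) : ContractedVertices u v ≃ {w : V // w ≠ v} where
  toFun o := ⟨valCV o, valCV_ne_v hne o⟩
  invFun w := toCV u v w
  left_inv o := by
    cases o with
    | none => simp [valCV, toCV_u]
    | some a => exact toCV_valCV_some a
  right_inv w := Subtype.ext (valCV_toCV w.2)

lemma card_CV [Fintype V] (hne : u ≠ v) :
    Fintype.card (ContractedVertices u v) + 1 = Fintype.card V := by
  classical
  rw [Fintype.card_congr (cvEquiv hne)]
  have h1 : Fintype.card {w : V // ¬ (w = v)} = Fintype.card V - Fintype.card {w : V // w = v} :=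
    Fintype.card_subtype_compl _
  have h2 : Fintype.card {w : V // w = v} = 1 := Fintype.card_subtype_eq v
  have h3 : 0 < Fintype.card V := Fintype.card_pos_iff.mpr ⟨v⟩
  simp only [ne_eq]
  omega

section Maps

variable {m N : ℕ}

/-- Insert `u` (at the `none` spot `j₀`) and `v` right after. -/
def sFun (hm : m + 1 = N) (τ : Fin m → ContractedVertices u v) (j₀ : Fin m) :
    Fin N → V := fun i =>
  if h : (i : ℕ) ≤ (j₀ : ℕ) then valCV (τ ⟨i, by have := j₀.isLt; omega⟩)
  else if (i : ℕ) = (j₀ : ℕ) + 1 then v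
  else valCV (τ ⟨(i : ℕ) - 1, by have := i.isLt; have := j₀.isLt; omega⟩)

/-- Collapse positions `i₀` (holding `u`) and `i₀+1` (holding `v`) into `none`. -/
def tFun (u v : V) (hm : m + 1 = N) (σ : Fin N → V) (i₀ : ℕ) :
    Fin m → ContractedVertices u v := fun j =>
  if (j : ℕ) < i₀ then toCV u v (σ ⟨j, by have := j.isLt; omega⟩)
  else if (j : ℕ) = i₀ then none
  else toCV u v (σ ⟨(j : ℕ) + 1, by have := j.isLt; omega⟩)

variable {hm : m + 1 = N} {τ : Fin m → ContractedVertices u v} {j₀ : Fin m}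

lemma sFun_le {i : ℕ} (hi : i ≤ (j₀ : ℕ)) (hiN : i < N) :
    sFun hm τ j₀ ⟨i, hiN⟩ = valCV (τ ⟨i, by have := j₀.isLt; omega⟩) := by
  simp only [sFun, dif_pos hi]

lemma sFun_succ (hiN : (j₀ : ℕ) + 1 < N) :
    sFun hm τ j₀ ⟨(j₀ : ℕ) + 1, hiN⟩ = v := by
  simp only [sFun]; rw [dif_neg (by omega)]; simp

lemma sFun_gt {i : ℕ} (hi : (j₀ : ℕ) + 2 ≤ i) (hiN : i < N) :
    sFun hm τ j₀ ⟨i, hiN⟩ = valCV (τ ⟨i - 1, by omega⟩) := by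
  simp only [sFun]; rw [dif_neg (by omega), if_neg (by omega)]

variable {σf : Fin N → V} {i₀ : ℕ}

lemma tFun_lt {j : ℕ} (hj : j < i₀) (hjm : j < m) :
    tFun u v hm σf i₀ ⟨j, hjm⟩ = toCV u v (σf ⟨j, by omega⟩) := by
  simp only [tFun, if_pos hj]

lemma tFun_eq (hjm : i₀ < m) : tFun u v hm σf i₀ ⟨i₀, hjm⟩ = none := by
  simp only [tFun]; rw [if_neg (by omega)]; simp

lemma tFun_gt {j : ℕ} (hj : i₀ < j) (hjm : j < m) :
    tFun u v hm σf i₀ ⟨j, hjm⟩ = toCV u v (σf ⟨j + 1, by omega⟩) := by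
  simp only [tFun]; rw [if_neg (by omega), if_neg (by omega)]

end Maps


section Inj

variable {m N : ℕ} {hm : m + 1 = N}

lemma sFun_eq_u_iff (hne : u ≠ v) {τ : Fin m → ContractedVertices u v}
    (hτinj : Function.Injective τ) {j₀ : Fin m} (hj₀ : τ j₀ = none) (i : Fin N) :
    sFun hm τ j₀ i = u ↔ (i : ℕ) = (j₀ : ℕ) := by
  obtain ⟨i, hiN⟩ := i
  have hj := j₀.isLt
  rcases Nat.lt_trichotomy i ((j₀ : ℕ) + 1) with h | h | h
  · rw [sFun_le (by omega) hiN]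
    constructor
    · intro hval
      have : τ ⟨i, by omega⟩ = none := valCV_inj (by simpa [valCV, hj₀] using hval)
      have := hτinj (this.trans hj₀.symm)
      simpa [Fin.ext_iff] using this
    · intro hi
      have : (⟨i, by omega⟩ : Fin m) = j₀ := Fin.ext hi
      rw [this, hj₀]; rfl
  · subst h; rw [sFun_succ hiN]
    exact ⟨fun h1 => absurd h1 hne.symm, fun h1 => by simp at h1⟩
  · rw [sFun_gt (by omega) hiN]
    have hne' : τ ⟨i - 1, by omega⟩ ≠ none := fun hc => by
      have := hτinj (hc.trans hj₀.symm)
      simp [Fin.ext_iff] at this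
      omega
    obtain ⟨a, ha⟩ := Option.ne_none_iff_exists'.mp hne'
    rw [ha]
    simp only [valCV]
    constructor
    · exact fun hc => absurd hc a.2.1
    · omega

lemma sFun_injective (hne : u ≠ v) {τ : Fin m → ContractedVertices u v}
    (hτinj : Function.Injective τ) {j₀ : Fin m} (hj₀ : τ j₀ = none) :
    Function.Injective (sFun hm τ j₀) := by
  have key : ∀ a b : Fin m, valCV (τ a) = valCV (τ b) → a = b := fun a b h =>
    hτinj (valCV_inj h)
  intro ⟨i, hi⟩ ⟨i', hi'⟩ hE
  have hj := j₀.isLt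
  simp only [Fin.mk.injEq]
  rcases Nat.lt_trichotomy i ((j₀ : ℕ) + 1) with h | h | h <;>
    rcases Nat.lt_trichotomy i' ((j₀ : ℕ) + 1) with h' | h' | h'
  · rw [sFun_le (by omega) hi, sFun_le (by omega) hi'] at hE
    simpa [Fin.ext_iff] using key _ _ hE
  · subst h'; rw [sFun_le (by omega) hi, sFun_succ hi'] at hE
    exact absurd hE (valCV_ne_v hne _)
  · rw [sFun_le (by omega) hi, sFun_gt (by omega) hi'] at hE
    have := key _ _ hE
    simp [Fin.ext_iff] at this
    omega
  · subst h; rw [sFun_succ hi, sFun_le (by omega) hi'] at hE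
    exact absurd hE.symm (valCV_ne_v hne _)
  · omega
  · subst h; rw [sFun_succ hi, sFun_gt (by omega) hi'] at hE
    exact absurd hE.symm (valCV_ne_v hne _)
  · rw [sFun_gt (by omega) hi, sFun_le (by omega) hi'] at hE
    have := key _ _ hE
    simp [Fin.ext_iff] at this
    omega
  · subst h'; rw [sFun_gt (by omega) hi, sFun_succ hi'] at hE
    exact absurd hE (valCV_ne_v hne _)
  · rw [sFun_gt (by omega) hi, sFun_gt (by omega) hi'] at hE
    have := key _ _ hE
    simp [Fin.ext_iff] at this
    omega

end Inj


section InjT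

variable {m N : ℕ} {hm : m + 1 = N} {σf : Fin N → V} {i₀ : ℕ}

lemma tFun_eq_none_iff (hσinj : Function.Injective σf) (hi₀ : i₀ + 1 < N)
    (hu : σf ⟨i₀, by omega⟩ = u) (hv : σf ⟨i₀ + 1, hi₀⟩ = v) (j : Fin m) :
    tFun u v hm σf i₀ j = none ↔ (j : ℕ) = i₀ := by
  obtain ⟨j, hjm⟩ := j
  simp only [Fin.val_mk]
  have hval : ∀ (k : ℕ) (hk : k < N), k ≠ i₀ → k ≠ i₀ + 1 →
      toCV u v (σf ⟨k, hk⟩) ≠ none := by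
    intro k hk h1 h2 hc
    rcases toCV_eq_none hc with h | h
    · rw [← hu] at h; have := hσinj h; simp [Fin.ext_iff] at this; omega
    · rw [← hv] at h; have := hσinj h; simp [Fin.ext_iff] at this; omega
  rcases Nat.lt_trichotomy j i₀ with h | h | h
  · rw [tFun_lt h hjm]
    exact ⟨fun hc => absurd hc (hval _ _ (by omega) (by omega)), fun hc => by omega⟩
  · subst h; rw [tFun_eq hjm]; simp
  · rw [tFun_gt h hjm]
    exact ⟨fun hc => absurd hc (hval _ _ (by omega) (by omega)), fun hc => by omega⟩

lemma tFun_injective (hσinj : Function.Injective σf) (hi₀ : i₀ + 1 < N)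
    (hu : σf ⟨i₀, by omega⟩ = u) (hv : σf ⟨i₀ + 1, hi₀⟩ = v) :
    Function.Injective (tFun u v hm σf i₀) := by
  have hne' : ∀ (k : ℕ) (hk : k < N), k ≠ i₀ → k ≠ i₀ + 1 →
      σf ⟨k, hk⟩ ≠ u ∧ σf ⟨k, hk⟩ ≠ v := by
    intro k hk h1 h2
    constructor
    · intro hc; rw [← hu] at hc; have := hσinj hc; simp [Fin.ext_iff] at this; omega
    · intro hc; rw [← hv] at hc; have := hσinj hc; simp [Fin.ext_iff] at this; omega
  have key : ∀ (k k' : ℕ) (hk : k < N) (hk' : k' < N), k ≠ i₀ → k ≠ i₀ + 1 →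
      k' ≠ i₀ → k' ≠ i₀ + 1 →
      toCV u v (σf ⟨k, hk⟩) = toCV u v (σf ⟨k', hk'⟩) → k = k' := by
    intro k k' hk hk' h1 h2 h3 h4 hE
    rw [toCV_pos (hne' k hk h1 h2), toCV_pos (hne' k' hk' h3 h4)] at hE
    have : σf ⟨k, hk⟩ = σf ⟨k', hk'⟩ := by
      simpa [Subtype.ext_iff] using hE
    have := hσinj this; simpa [Fin.ext_iff] using this
  intro ⟨j, hj⟩ ⟨j', hj'⟩ hE
  simp only [Fin.mk.injEq]
  have h1 := (tFun_eq_none_iff (hm := hm) hσinj hi₀ hu hv ⟨j, hj⟩)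
  have h2 := (tFun_eq_none_iff (hm := hm) hσinj hi₀ hu hv ⟨j', hj'⟩)
  simp only [Fin.val_mk] at h1 h2
  rcases Nat.lt_trichotomy j i₀ with h | h | h <;>
    rcases Nat.lt_trichotomy j' i₀ with h' | h' | h'
  · rw [tFun_lt h hj, tFun_lt h' hj'] at hE
    exact key _ _ _ _ (by omega) (by omega) (by omega) (by omega) hE
  · have := h2.mpr (by omega)
    rw [this] at hE
    have := h1.mp hE; omega
  · rw [tFun_lt h hj, tFun_gt h' hj'] at hE
    have := key _ _ _ _ (by omega) (by omega) (by omega) (by omega) hE; omega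
  · have := h1.mpr (by omega)
    rw [this] at hE
    have := h2.mp hE.symm; omega
  · omega
  · have := h1.mpr (by omega)
    rw [this] at hE
    have := h2.mp hE.symm; omega
  · rw [tFun_gt h hj, tFun_lt h' hj'] at hE
    have := key _ _ _ _ (by omega) (by omega) (by omega) (by omega) hE; omega
  · have := h2.mpr (by omega)
    rw [this] at hE
    have := h1.mp hE; omega
  · rw [tFun_gt h hj, tFun_gt h' hj'] at hE
    have := key _ _ _ _ (by omega) (by omega) (by omega) (by omega) hE; omega

end InjT


section Friendly

variable {m N : ℕ} {hm : m + 1 = N} {E : Set (V × V)} {f : V → ℕ+}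

lemma mem_contract_some_some {a b} :
    ((some a, some b) ∈ contractEdges E u v) ↔ ((a : V), (b : V)) ∈ E := Iff.rfl
lemma mem_contract_some_none {a} :
    ((some a, none) ∈ contractEdges E u v) ↔ ((a : V), u) ∈ E := Iff.rfl
lemma mem_contract_none_some {b} :
    ((none, some b) ∈ contractEdges E u v) ↔ (v, (b : V)) ∈ E := Iff.rfl

lemma mem_contract_of {o o' : ContractedVertices u v} (ho : o ≠ none)
    (h : (valCV o, valCV o') ∈ E) : (o, o') ∈ contractEdges E u v := by
  cases o with
  | none => exact absurd rfl ho
  | some a =>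
    cases o' with
    | none => exact mem_contract_some_none.mpr h
    | some b => exact mem_contract_some_some.mpr h

lemma sFun_monotone (hf : f u = f v) {τ : Fin m → ContractedVertices u v} {j₀ : Fin m}
    (hj₀ : τ j₀ = none)
    (hmono : Monotone fun j => contractColoring f u v (τ j)) :
    Monotone fun i => f (sFun hm τ j₀ i) := by
  have hj := j₀.isLt
  let c : Fin N → Fin m := fun i =>
    if h : (i : ℕ) ≤ (j₀ : ℕ) then ⟨i, by omega⟩
    else ⟨(i : ℕ) - 1, by have := i.isLt; omega⟩
  have hc : Monotone c := by
    intro a b hab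
    have hab' : (a : ℕ) ≤ (b : ℕ) := hab
    simp only [c]
    split_ifs <;> simp only [Fin.mk_le_mk] <;> omega
  have heq : (fun i => f (sFun hm τ j₀ i)) = (fun j => contractColoring f u v (τ j)) ∘ c := by
    funext i
    obtain ⟨i, hiN⟩ := i
    simp only [Function.comp_apply, c]
    rcases Nat.lt_trichotomy i ((j₀ : ℕ) + 1) with h | h | h
    · rw [sFun_le (by omega) hiN, dif_pos (by show i ≤ (j₀:ℕ); omega),
        contractColoring_eq]
    · subst h
      rw [sFun_succ hiN, dif_neg (by show ¬((j₀:ℕ)+1 ≤ (j₀:ℕ)); omega)]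
      have h2 : (⟨(j₀ : ℕ) + 1 - 1, by omega⟩ : Fin m) = j₀ := Fin.ext (by simp)
      rw [h2, hj₀]
      exact hf.symm
    · rw [sFun_gt (by omega) hiN, dif_neg (by show ¬(i ≤ (j₀:ℕ)); omega),
        contractColoring_eq]
  rw [heq]
  exact hmono.comp hc

lemma sFun_edge (hne : u ≠ v) (he : (u, v) ∈ E) (hf : f u = f v)
    {τ : Fin m → ContractedVertices u v} (hτinj : Function.Injective τ) {j₀ : Fin m}
    (hj₀ : τ j₀ = none)
    (hedge : ∀ j : Fin m, ∀ h : (j : ℕ) + 1 < m,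
      (τ j, τ ⟨(j : ℕ) + 1, h⟩) ∈ contractEdges E u v →
        contractColoring f u v (τ j) < contractColoring f u v (τ ⟨(j : ℕ) + 1, h⟩)) :
    ∀ i : Fin N, ∀ h : (i : ℕ) + 1 < N,
      (sFun hm τ j₀ i, sFun hm τ j₀ ⟨(i : ℕ) + 1, h⟩) ∈ E \ {(u, v)} →
        f (sFun hm τ j₀ i) < f (sFun hm τ j₀ ⟨(i : ℕ) + 1, h⟩) := by
  have hj := j₀.isLt
  have hτne : ∀ (k : ℕ) (hk : k < m), k ≠ (j₀ : ℕ) → τ ⟨k, hk⟩ ≠ none := by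
    intro k hk hkj hc
    have := hτinj (hc.trans hj₀.symm)
    simp [Fin.ext_iff] at this; omega
  have hedge' : ∀ (k : ℕ) (hk : k + 1 < m),
      (τ ⟨k, by omega⟩, τ ⟨k + 1, hk⟩) ∈ contractEdges E u v →
        f (valCV (τ ⟨k, by omega⟩)) < f (valCV (τ ⟨k + 1, hk⟩)) := by
    intro k hk hC
    have h2 := hedge ⟨k, by omega⟩ (by exact hk) hC
    rw [contractColoring_eq, contractColoring_eq] at h2
    exact h2
  intro ⟨i, hiN⟩ h hE
  simp only [Fin.val_mk] at h hE ⊢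
  rcases Nat.lt_trichotomy i (j₀ : ℕ) with hcase | hcase | hcase
  · -- i + 1 ≤ j₀
    rw [sFun_le (by omega) hiN, sFun_le (by omega) h] at hE ⊢
    exact hedge' i (by omega) (mem_contract_of (hτne _ _ (by omega)) hE.1)
  · -- i = j₀ : the deleted edge, contradiction
    subst hcase
    rw [sFun_le (le_refl _) hiN] at hE
    have h1 : (⟨(j₀ : ℕ), by omega⟩ : Fin m) = j₀ := Fin.ext rfl
    rw [h1, hj₀] at hE
    rw [sFun_succ h] at hE
    exact absurd rfl hE.2
  · rcases Nat.lt_trichotomy i ((j₀ : ℕ) + 1) with hc2 | hc2 | hc2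
    · omega
    · -- i = j₀ + 1
      subst hc2
      rw [sFun_succ hiN, sFun_gt (by omega) h] at hE ⊢
      have hlt : (j₀ : ℕ) + 1 < m := by omega
      have e2 : (⟨(j₀ : ℕ) + 1 + 1 - 1, by omega⟩ : Fin m) = ⟨(j₀ : ℕ) + 1, hlt⟩ :=
        Fin.ext (by simp only [Fin.val_mk]; omega)
      rw [e2] at hE ⊢
      obtain ⟨b, hb⟩ := Option.ne_none_iff_exists'.mp (hτne ((j₀ : ℕ) + 1) hlt (by omega))
      rw [hb] at hE ⊢
      have hC : (τ j₀, τ ⟨(j₀ : ℕ) + 1, hlt⟩) ∈ contractEdges E u v := by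
        rw [hj₀, hb]; exact mem_contract_none_some.mpr hE.1
      have h2 := hedge j₀ hlt hC
      rw [hj₀, hb] at h2
      simp only [contractColoring] at h2
      simpa [valCV, ← hf] using h2
    · -- i ≥ j₀ + 2
      rw [sFun_gt (by omega) hiN, sFun_gt (by omega) h] at hE ⊢
      have e : (⟨i - 1 + 1, by omega⟩ : Fin m) = ⟨i + 1 - 1, by omega⟩ :=
        Fin.ext (by simp only [Fin.val_mk]; omega)
      have h2 := hedge' (i - 1) (by omega)
        (by rw [e]; exact mem_contract_of (hτne _ _ (by omega)) hE.1)
      rw [e] at h2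
      exact h2

end Friendly


section FriendlyT

variable {m N : ℕ} {hm : m + 1 = N} {E : Set (V × V)} {f : V → ℕ+}

lemma tFun_monotone (hf : f u = f v) {σf : Fin N → V} {i₀ : ℕ} (hi₀ : i₀ + 1 < N)
    (hu : σf ⟨i₀, by omega⟩ = u)
    (hmono : Monotone fun i => f (σf i)) :
    Monotone fun j => contractColoring f u v (tFun u v hm σf i₀ j) := by
  let d : Fin m → Fin N := fun j =>
    if h : (j : ℕ) ≤ i₀ then ⟨j, by have := j.isLt; omega⟩
    else ⟨(j : ℕ) + 1, by have := j.isLt; omega⟩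
  have hd : Monotone d := by
    intro a b hab
    have hab' : (a : ℕ) ≤ (b : ℕ) := hab
    simp only [d]
    split_ifs <;> simp only [Fin.mk_le_mk] <;> omega
  have heq : (fun j => contractColoring f u v (tFun u v hm σf i₀ j))
      = (fun i => f (σf i)) ∘ d := by
    funext j
    obtain ⟨j, hjm⟩ := j
    simp only [Function.comp_apply, d]
    rcases Nat.lt_trichotomy j i₀ with h | h | h
    · rw [tFun_lt h hjm, dif_pos (by show j ≤ i₀; omega), contractColoring_toCV hf]
    · subst h
      rw [tFun_eq hjm, dif_pos (by show j ≤ j; omega)]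
      show f u = f (σf ⟨j, by omega⟩)
      rw [hu]
    · rw [tFun_gt h hjm, dif_neg (by show ¬(j ≤ i₀); omega), contractColoring_toCV hf]
  rw [heq]
  exact hmono.comp hd

lemma tFun_edge (hne : u ≠ v) (hf : f u = f v) {σf : Fin N → V}
    (hσinj : Function.Injective σf) {i₀ : ℕ} (hi₀ : i₀ + 1 < N)
    (hu : σf ⟨i₀, by omega⟩ = u) (hv : σf ⟨i₀ + 1, hi₀⟩ = v)
    (hedge : ∀ i : Fin N, ∀ h : (i : ℕ) + 1 < N,
      (σf i, σf ⟨(i : ℕ) + 1, h⟩) ∈ E \ {(u, v)} →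
        f (σf i) < f (σf ⟨(i : ℕ) + 1, h⟩)) :
    ∀ j : Fin m, ∀ h : (j : ℕ) + 1 < m,
      (tFun u v hm σf i₀ j, tFun u v hm σf i₀ ⟨(j : ℕ) + 1, h⟩) ∈ contractEdges E u v →
        contractColoring f u v (tFun u v hm σf i₀ j)
          < contractColoring f u v (tFun u v hm σf i₀ ⟨(j : ℕ) + 1, h⟩) := by
  have hne' : ∀ (k : ℕ) (hk : k < N), k ≠ i₀ → k ≠ i₀ + 1 →
      σf ⟨k, hk⟩ ≠ u ∧ σf ⟨k, hk⟩ ≠ v := by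
    intro k hk h1 h2
    constructor
    · intro hc; rw [← hu] at hc; have := hσinj hc; simp [Fin.ext_iff] at this; omega
    · intro hc; rw [← hv] at hc; have := hσinj hc; simp [Fin.ext_iff] at this; omega
  have hedge' : ∀ (k : ℕ) (hk : k + 1 < N),
      (σf ⟨k, by omega⟩, σf ⟨k + 1, hk⟩) ∈ E \ {(u, v)} →
        f (σf ⟨k, by omega⟩) < f (σf ⟨k + 1, hk⟩) := by
    intro k hk hE
    exact hedge ⟨k, by omega⟩ (by exact hk) hE
  intro ⟨j, hjm⟩ h hC
  simp only [Fin.val_mk] at h hC ⊢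
  rcases Nat.lt_trichotomy (j + 1) i₀ with hcase | hcase | hcase
  · -- j + 1 < i₀
    rw [tFun_lt (by omega) hjm, tFun_lt (by omega) (by omega)] at hC ⊢
    have hw1 := hne' j (by omega) (by omega) (by omega)
    have hw2 := hne' (j + 1) (by omega) (by omega) (by omega)
    rw [toCV_pos hw1, toCV_pos hw2] at hC
    rw [contractColoring_toCV hf, contractColoring_toCV hf]
    refine hedge' j (by omega) ⟨mem_contract_some_some.mp hC, ?_⟩
    simp only [Set.mem_singleton_iff, Prod.mk.injEq, not_and]
    intro hc
    exact absurd hc hw1.1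
  · -- j + 1 = i₀
    rw [tFun_lt (by omega) hjm, show ((⟨j + 1, by omega⟩ : Fin m)) = ⟨i₀, by omega⟩ from
      Fin.ext (by simp only [Fin.val_mk]; omega), tFun_eq (by omega)] at hC ⊢
    have hw1 := hne' j (by omega) (by omega) (by omega)
    rw [toCV_pos hw1] at hC
    rw [contractColoring_toCV hf]
    have hEd : (σf ⟨j, by omega⟩, u) ∈ E := mem_contract_some_none.mp hC
    have h2 := hedge' j (by omega) ⟨by
      rw [show (⟨j + 1, by omega⟩ : Fin N) = ⟨i₀, by omega⟩ from
        Fin.ext (by simp only [Fin.val_mk]; omega), hu]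
      exact hEd, by
      simp only [Set.mem_singleton_iff, Prod.mk.injEq, not_and]
      intro hc
      exact absurd hc hw1.1⟩
    rw [show (⟨j + 1, by omega⟩ : Fin N) = ⟨i₀, by omega⟩ from
      Fin.ext (by simp only [Fin.val_mk]; omega), hu] at h2
    show _ < contractColoring f u v none
    simpa [contractColoring] using h2
  · rcases Nat.lt_trichotomy j i₀ with hc2 | hc2 | hc2
    · omega
    · -- j = i₀
      subst hc2
      rw [tFun_eq hjm, tFun_gt (by omega) (by omega)] at hC ⊢
      have hw2 := hne' (j + 1 + 1) (by omega) (by omega) (by omega)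
      rw [toCV_pos hw2] at hC
      have hEd : (v, σf ⟨j + 1 + 1, by omega⟩) ∈ E := mem_contract_none_some.mp hC
      have h2 := hedge' (j + 1) (by omega) ⟨by
        rw [show (⟨j + 1, by omega⟩ : Fin N) = ⟨j + 1, hi₀⟩ from rfl, hv]
        exact hEd, by
        simp only [Set.mem_singleton_iff, Prod.mk.injEq, not_and]
        intro hc
        rw [show (⟨j + 1, by omega⟩ : Fin N) = ⟨j + 1, hi₀⟩ from rfl, hv] at hc
        exact absurd hc.symm hne⟩
      rw [show (⟨j + 1, by omega⟩ : Fin N) = ⟨j + 1, hi₀⟩ from rfl, hv] at h2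
      rw [contractColoring_toCV hf]
      show contractColoring f u v none < _
      simp only [contractColoring]
      rw [hf]
      exact h2
    · -- j > i₀
      rw [tFun_gt (by omega) hjm, tFun_gt (by omega) (by omega)] at hC ⊢
      have hw1 := hne' (j + 1) (by omega) (by omega) (by omega)
      have hw2 := hne' (j + 1 + 1) (by omega) (by omega) (by omega)
      rw [toCV_pos hw1, toCV_pos hw2] at hC
      rw [contractColoring_toCV hf, contractColoring_toCV hf]
      refine hedge' (j + 1) (by omega) ⟨mem_contract_some_some.mp hC, ?_⟩
      simp only [Set.mem_singleton_iff, Prod.mk.injEq, not_and]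
      intro hc
      exact absurd hc hw1.1

end FriendlyT


section Roundtrip

variable {m N : ℕ} {hm : m + 1 = N}

lemma tFun_sFun {τ : Fin m → ContractedVertices u v} (hτinj : Function.Injective τ)
    {j₀ : Fin m} (hj₀ : τ j₀ = none) (j : Fin m) :
    tFun u v hm (sFun hm τ j₀) (j₀ : ℕ) j = τ j := by
  have hj := j₀.isLt
  have hτne : ∀ (k : ℕ) (hk : k < m), k ≠ (j₀ : ℕ) → τ ⟨k, hk⟩ ≠ none := by
    intro k hk hkj hc
    have := hτinj (hc.trans hj₀.symm)
    simp [Fin.ext_iff] at this; omega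
  obtain ⟨j, hjm⟩ := j
  rcases Nat.lt_trichotomy j (j₀ : ℕ) with h | h | h
  · rw [tFun_lt h hjm, sFun_le (by omega) (by omega)]
    obtain ⟨a, ha⟩ := Option.ne_none_iff_exists'.mp (hτne j hjm (by omega))
    rw [ha, toCV_valCV_some]
  · subst h
    rw [tFun_eq hjm, show (⟨(j₀ : ℕ), hjm⟩ : Fin m) = j₀ from Fin.ext rfl, hj₀]
  · rw [tFun_gt h hjm, sFun_gt (by omega) (by omega)]
    obtain ⟨a, ha⟩ := Option.ne_none_iff_exists'.mp (hτne j hjm (by omega))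
    rw [show (⟨j + 1 - 1, by omega⟩ : Fin m) = ⟨j, hjm⟩ from Fin.ext (by simp), ha,
      toCV_valCV_some]

lemma sFun_tFun (hne : u ≠ v) {σf : Fin N → V} (hσinj : Function.Injective σf)
    {i₀ : ℕ} (hi₀ : i₀ + 1 < N)
    (hu : σf ⟨i₀, by omega⟩ = u) (hv : σf ⟨i₀ + 1, hi₀⟩ = v) (i : Fin N) :
    sFun hm (tFun u v hm σf i₀) ⟨i₀, by omega⟩ i = σf i := by
  have hne' : ∀ (k : ℕ) (hk : k < N), k ≠ i₀ → k ≠ i₀ + 1 →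
      σf ⟨k, hk⟩ ≠ u ∧ σf ⟨k, hk⟩ ≠ v := by
    intro k hk h1 h2
    constructor
    · intro hc; rw [← hu] at hc; have := hσinj hc; simp [Fin.ext_iff] at this; omega
    · intro hc; rw [← hv] at hc; have := hσinj hc; simp [Fin.ext_iff] at this; omega
  obtain ⟨i, hiN⟩ := i
  rcases Nat.lt_trichotomy i i₀ with h | h | h
  · rw [sFun_le (show i ≤ i₀ by omega) hiN, tFun_lt h (by omega)]
    exact valCV_toCV (hne' i hiN (by omega) (by omega)).2
  · subst h
    rw [sFun_le (show i ≤ i from le_rfl) hiN, tFun_eq (by omega)]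
    exact hu.symm
  · rcases Nat.lt_trichotomy i (i₀ + 1) with h2 | h2 | h2
    · omega
    · subst h2
      exact (sFun_succ (by omega)).trans hv.symm
    · rw [sFun_gt (show i₀ + 2 ≤ i by omega) hiN,
        tFun_gt (show i₀ < i - 1 by omega) (by omega)]
      rw [show (⟨i - 1 + 1, by omega⟩ : Fin N) = ⟨i, hiN⟩ from
        Fin.ext (by simp only [Fin.val_mk]; omega)]
      exact valCV_toCV (hne' i hiN (by omega) (by omega)).2

end Roundtrip


section Main

variable [Fintype V] {E : Set (V × V)} {f : V → ℕ+}

def HasAdj (u v : V) (σ : Fin (Fintype.card V) ≃ V) : Prop :=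
  ∃ i : Fin (Fintype.card V), ∃ h : (i : ℕ) + 1 < Fintype.card V,
    σ i = u ∧ σ ⟨(i : ℕ) + 1, h⟩ = v

lemma sFun_bijective (hne : u ≠ v)
    (τ : Fin (Fintype.card (ContractedVertices u v)) ≃ ContractedVertices u v) :
    Function.Bijective (sFun (card_CV hne) ⇑τ (τ.symm none)) := by
  rw [Fintype.bijective_iff_injective_and_card]
  exact ⟨sFun_injective hne τ.injective (τ.apply_symm_apply none), by simp⟩

lemma sFun_apply_j₀ (hne : u ≠ v)
    (τ : Fin (Fintype.card (ContractedVertices u v)) ≃ ContractedVertices u v)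
    (h : ((τ.symm none : Fin _) : ℕ) < Fintype.card V) :
    sFun (card_CV hne) ⇑τ (τ.symm none) ⟨((τ.symm none : Fin _) : ℕ), h⟩ = u := by
  rw [sFun_le le_rfl, Fin.eta, τ.apply_symm_apply]
  rfl

lemma sFun_hasAdj (hne : u ≠ v)
    (τ : Fin (Fintype.card (ContractedVertices u v)) ≃ ContractedVertices u v) :
    HasAdj u v (Equiv.ofBijective _ (sFun_bijective hne τ)) := by
  have hm := card_CV (u := u) (v := v) hne
  have hlt := (τ.symm none).isLt
  refine ⟨⟨((τ.symm none : Fin _) : ℕ), by omega⟩, by simp only [Fin.val_mk]; omega, ?_, ?_⟩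
  · show sFun (card_CV hne) ⇑τ (τ.symm none) ⟨((τ.symm none : Fin _) : ℕ), by omega⟩ = u
    exact sFun_apply_j₀ hne τ _
  · show sFun (card_CV hne) ⇑τ (τ.symm none) _ = v
    exact sFun_succ _

lemma ofBij_symm_u (hne : u ≠ v)
    (τ : Fin (Fintype.card (ContractedVertices u v)) ≃ ContractedVertices u v) :
    (((Equiv.ofBijective _ (sFun_bijective hne τ)).symm u : Fin _) : ℕ)
      = ((τ.symm none : Fin _) : ℕ) := by
  have hm := card_CV (u := u) (v := v) hne
  have hlt := (τ.symm none).isLt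
  have h1 : (Equiv.ofBijective _ (sFun_bijective hne τ)).symm u
      = ⟨((τ.symm none : Fin _) : ℕ), by omega⟩ := by
    rw [Equiv.symm_apply_eq]
    exact (sFun_apply_j₀ hne τ (by omega)).symm
  rw [h1]

noncomputable def Fmap (hne : u ≠ v) (he : (u, v) ∈ E) (hf : f u = f v) :
    {τ : Fin (Fintype.card (ContractedVertices u v)) ≃ ContractedVertices u v //
      Friendly (contractEdges E u v) (contractColoring f u v) τ} →
    {σ : Fin (Fintype.card V) ≃ V // Friendly (E \ {(u, v)}) f σ ∧ HasAdj u v σ} :=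
  fun x =>
    ⟨Equiv.ofBijective _ (sFun_bijective hne x.1),
      ⟨⟨sFun_monotone (hm := card_CV hne) hf (x.1.apply_symm_apply none) x.2.1,
        sFun_edge (hm := card_CV hne) hne he hf x.1.injective
          (x.1.apply_symm_apply none) x.2.2⟩,
      sFun_hasAdj hne x.1⟩⟩

lemma hasAdj_spec {σ : Fin (Fintype.card V) ≃ V} (hadj : HasAdj u v σ) :
    ∃ h : ((σ.symm u : Fin _) : ℕ) + 1 < Fintype.card V,
      σ ⟨((σ.symm u : Fin _) : ℕ), by omega⟩ = u ∧
      σ ⟨((σ.symm u : Fin _) : ℕ) + 1, h⟩ = v := by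
  obtain ⟨i, hlt, hiu, hiv⟩ := hadj
  have hieq : σ.symm u = i := by rw [Equiv.symm_apply_eq, hiu]
  have hval : ((σ.symm u : Fin _) : ℕ) = (i : ℕ) := congrArg Fin.val hieq
  refine ⟨by omega, ?_, ?_⟩
  · rw [Fin.eta, Equiv.apply_symm_apply]
  · rw [show (⟨((σ.symm u : Fin _) : ℕ) + 1, by omega⟩ : Fin (Fintype.card V))
      = ⟨(i : ℕ) + 1, hlt⟩ from Fin.ext (by simp only [Fin.val_mk]; omega)]
    exact hiv

lemma tFun_bijective (hne : u ≠ v) (σ : Fin (Fintype.card V) ≃ V) (hadj : HasAdj u v σ) :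
    Function.Bijective (tFun u v (card_CV hne) ⇑σ ((σ.symm u : Fin _) : ℕ)) := by
  obtain ⟨hlt, hu', hv'⟩ := hasAdj_spec hadj
  rw [Fintype.bijective_iff_injective_and_card]
  exact ⟨tFun_injective σ.injective hlt hu' hv', by simp⟩

lemma ofBij_symm_none (hne : u ≠ v) (σ : Fin (Fintype.card V) ≃ V) (hadj : HasAdj u v σ) :
    (Equiv.ofBijective _ (tFun_bijective hne σ hadj)).symm none
      = ⟨((σ.symm u : Fin _) : ℕ), by
          have := card_CV (u := u) (v := v) hne
          have := (hasAdj_spec hadj).1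
          omega⟩ := by
  rw [Equiv.symm_apply_eq, Equiv.ofBijective_apply]
  exact (tFun_eq (hm := card_CV hne) (σf := ⇑σ) (i₀ := ((σ.symm u : Fin _) : ℕ)) (by
    have := card_CV (u := u) (v := v) hne
    have := (hasAdj_spec hadj).1
    omega)).symm

noncomputable def Gmap (hne : u ≠ v) (he : (u, v) ∈ E) (hf : f u = f v) :
    {σ : Fin (Fintype.card V) ≃ V // Friendly (E \ {(u, v)}) f σ ∧ HasAdj u v σ} →
    {τ : Fin (Fintype.card (ContractedVertices u v)) ≃ ContractedVertices u v //
      Friendly (contractEdges E u v) (contractColoring f u v) τ} :=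
  fun x =>
    ⟨Equiv.ofBijective _ (tFun_bijective hne x.1 x.2.2), by
      obtain ⟨hlt, hu', hv'⟩ := hasAdj_spec x.2.2
      exact ⟨tFun_monotone (hm := card_CV hne) hf hlt hu' x.2.1.1,
        tFun_edge (hm := card_CV hne) hne hf x.1.injective hlt hu' hv' x.2.1.2⟩⟩

lemma Gmap_Fmap (hne : u ≠ v) (he : (u, v) ∈ E) (hf : f u = f v) (x) :
    Gmap hne he hf (Fmap hne he hf x) = x := by
  obtain ⟨τ, hτ⟩ := x
  apply Subtype.ext
  apply Equiv.coe_fn_injective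
  funext j
  simp only [Gmap, Fmap]
  rw [Equiv.ofBijective_apply]
  have hcoe : ⇑(Equiv.ofBijective _ (sFun_bijective hne τ))
      = sFun (card_CV hne) ⇑τ (τ.symm none) := rfl
  rw [hcoe, ofBij_symm_u hne τ]
  exact tFun_sFun τ.injective (τ.apply_symm_apply none) j

lemma Fmap_Gmap (hne : u ≠ v) (he : (u, v) ∈ E) (hf : f u = f v) (y) :
    Fmap hne he hf (Gmap hne he hf y) = y := by
  obtain ⟨σ, hσ⟩ := y
  apply Subtype.ext
  apply Equiv.coe_fn_injective
  funext i
  obtain ⟨hlt, hu', hv'⟩ := hasAdj_spec hσ.2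
  simp only [Fmap, Gmap]
  rw [Equiv.ofBijective_apply]
  have hcoe : ⇑(Equiv.ofBijective _ (tFun_bijective hne σ hσ.2))
      = tFun u v (card_CV hne) ⇑σ ((σ.symm u : Fin _) : ℕ) := rfl
  rw [hcoe, ofBij_symm_none hne σ hσ.2]
  exact sFun_tFun hne σ.injective hlt hu' hv' i

lemma card_main (hne : u ≠ v) (he : (u, v) ∈ E) (hf : f u = f v) :
    Nat.card {σ : Fin (Fintype.card V) ≃ V // Friendly (E \ {(u, v)}) f σ ∧ HasAdj u v σ}
      = Nat.card {τ : Fin (Fintype.card (ContractedVertices u v)) ≃ ContractedVertices u v //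
          Friendly (contractEdges E u v) (contractColoring f u v) τ} :=
  Nat.card_congr
    ⟨Gmap hne he hf, Fmap hne he hf, Fmap_Gmap hne he hf, Gmap_Fmap hne he hf⟩


lemma friendly_iff (he : (u, v) ∈ E) (hf : f u = f v) (σ : Fin (Fintype.card V) ≃ V) :
    Friendly E f σ ↔ Friendly (E \ {(u, v)}) f σ ∧ ¬ HasAdj u v σ := by
  constructor
  · rintro ⟨hmono, hedge⟩
    refine ⟨⟨hmono, fun i h hE => hedge i h hE.1⟩, ?_⟩
    rintro ⟨i, h, hiu, hiv⟩
    have := hedge i h (by rw [hiu, hiv]; exact he)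
    rw [hiu, hiv, hf] at this
    exact lt_irrefl _ this
  · rintro ⟨⟨hmono, hedge⟩, hadj⟩
    refine ⟨hmono, fun i h hE => ?_⟩
    by_cases hmem : (σ i, σ ⟨(i : ℕ) + 1, h⟩) = (u, v)
    · exact absurd ⟨i, h, congrArg Prod.fst hmem, congrArg Prod.snd hmem⟩ hadj
    · exact hedge i h ⟨hE, hmem⟩

lemma friendly_iff' (he : (u, v) ∈ E) (hf : f u ≠ f v) (σ : Fin (Fintype.card V) ≃ V) :
    Friendly E f σ ↔ Friendly (E \ {(u, v)}) f σ := by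
  constructor
  · rintro ⟨hmono, hedge⟩
    exact ⟨hmono, fun i h hE => hedge i h hE.1⟩
  · rintro ⟨hmono, hedge⟩
    refine ⟨hmono, fun i h hE => ?_⟩
    by_cases hmem : (σ i, σ ⟨(i : ℕ) + 1, h⟩) = (u, v)
    · have h1 : σ i = u := congrArg Prod.fst hmem
      have h2 : σ ⟨(i : ℕ) + 1, h⟩ = v := congrArg Prod.snd hmem
      have hle : f (σ i) ≤ f (σ ⟨(i : ℕ) + 1, h⟩) := by
        apply hmono
        show (i : ℕ) ≤ (i : ℕ) + 1
        omega
      rw [h1, h2] at hle ⊢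
      exact lt_of_le_of_ne hle hf
    · exact hedge i h ⟨hE, hmem⟩

lemma card_split {α : Type*} [Finite α] (P Q : α → Prop) :
    Nat.card {x // P x} = Nat.card {x // P x ∧ Q x} + Nat.card {x // P x ∧ ¬ Q x} := by
  classical
  rw [← Nat.card_sum]
  apply Nat.card_congr
  exact (((Equiv.sumCongr (Equiv.subtypeSubtypeEquivSubtypeInter P Q)
    (Equiv.subtypeSubtypeEquivSubtypeInter P (fun x => ¬ Q x)))).symm.trans
    (Equiv.sumCompl (fun x : {a // P a} => Q ↑x))).symm

end Main

end RB

/-- Deletion-contraction: for a digraph `X = (V, E)`, an edge `e = (u, v) ∈ E` with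
`u ≠ v`, and any coloring `f`: if `f u = f v` then
`N(f, X) = N(f, X∖e) − N(f̃, X/e)` (as integers), and if `f u ≠ f v` then
`N(f, X) = N(f, X∖e)`. -/
theorem redeiBergeCount_deletion_contraction {V : Type*} [Fintype V] [DecidableEq V]
    (E : Set (V × V)) (u v : V) (hne : u ≠ v) (he : (u, v) ∈ E) (f : V → ℕ+) :
    (f u = f v →
      (redeiBergeCount E f : ℤ) =
        (redeiBergeCount (E \ {(u, v)}) f : ℤ) -
          (redeiBergeCount (contractEdges E u v) (contractColoring f u v) : ℤ)) ∧
    (f u ≠ f v →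
      redeiBergeCount E f = redeiBergeCount (E \ {(u, v)}) f) := by
  constructor
  · intro hf
    have hFin : Finite (Fin (Fintype.card V) ≃ V) := by
      have := Equiv.instFintype (α := Fin (Fintype.card V)) (β := V)
      exact Finite.of_fintype _
    have h1 : redeiBergeCount E f
        = Nat.card {σ : Fin (Fintype.card V) ≃ V //
            Friendly (E \ {(u, v)}) f σ ∧ ¬ RB.HasAdj u v σ} :=
      Nat.card_congr (Equiv.subtypeEquivRight (fun σ => RB.friendly_iff he hf σ))
    have h2 : redeiBergeCount (E \ {(u, v)}) f
        = Nat.card {σ : Fin (Fintype.card V) ≃ V //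
            Friendly (E \ {(u, v)}) f σ ∧ RB.HasAdj u v σ}
          + Nat.card {σ : Fin (Fintype.card V) ≃ V //
            Friendly (E \ {(u, v)}) f σ ∧ ¬ RB.HasAdj u v σ} :=
      RB.card_split _ _
    have h3 := RB.card_main hne he hf
    rw [h1, h2, redeiBergeCount, ← h3]
    push_cast
    ring
  · intro hf
    exact Nat.card_congr (Equiv.subtypeEquivRight (fun σ => RB.friendly_iff' he hf σ))
end

section
/- The noncommutative Redei–Berge function of any digraph is symmetric: for any digraph X = (V, E), every coloring f : V → ℤ⁺, and every permutation δ of ℤ⁺, the number of (f, X)-friendly V-listings equals the number of (δ∘f, X)-friendly V-listings, i.e. N(f, X) = N(δ∘f, X). -/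
open Tuple

section Sorting

variable {n : ℕ} {α : Type*} [LinearOrder α]

theorem Tuple.sort_lt_sort_iff_of_eq {p : Fin n → α} {i j : Fin n}
    (h : p (sort p i) = p (sort p j)) : sort p i < sort p j ↔ i < j := by
  refine ⟨fun hlt => ?_, fun hij => (eq_sort_iff.mp rfl).2 i j hij h⟩
  rcases lt_trichotomy i j with hij | rfl | hji
  · exact hij
  · exact absurd hlt (lt_irrefl _)
  · exact absurd ((eq_sort_iff.mp rfl).2 j i hji h.symm) hlt.not_gt

theorem val_apply_eq_succ_of_monotone {u : Fin n → α} (hu : Monotone u)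
    {π : Equiv.Perm (Fin n)} (hπ : ∀ a b, u (π a) = u (π b) → (π a < π b ↔ a < b))
    {i j : Fin n} (hij : (j : ℕ) = i + 1) (heq : u (π i) = u (π j)) :
    (π j : ℕ) = π i + 1 := by
  have hlt : π i < π j := (hπ i j heq).mpr (by rw [Fin.lt_def]; omega)
  set m : Fin n := ⟨π i + 1, by have := (π j).isLt; rw [Fin.lt_def] at hlt; omega⟩
  have him : π i < m := by rw [Fin.lt_def]; simp [m]
  have hmj : m ≤ π j := by rw [Fin.le_def]; simpa [m] using hlt
  -- `u` is constant on `[π i, π j]`, so `π⁻¹ m` lies strictly after `i` and not after `j = i + 1`.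
  have hum : u (π (π.symm m)) = u (π i) := by
    rw [Equiv.apply_symm_apply]
    exact le_antisymm (heq ▸ hu hmj) (hu him.le)
  have hik : i < π.symm m := (hπ i _ hum.symm).mp (by simpa using him)
  have hkj : ¬ j < π.symm m := fun h =>
    ((hπ j _ (hum.trans heq).symm).mpr h).not_ge (by simpa using hmj)
  have hk : π.symm m = j := by
    rw [Fin.lt_def] at hik hkj; exact Fin.ext (by omega)
  rw [← hk, Equiv.apply_symm_apply]

end Sorting

section Listings

variable {V β : Type*} [LinearOrder β] {n : ℕ}

def sortBy (g : V → β) (σ : Fin n ≃ V) : Fin n ≃ V :=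
  (sort (g ∘ σ)).trans σ

theorem monotone_sortBy (g : V → β) (σ : Fin n ≃ V) : Monotone (g ∘ sortBy g σ) :=
  monotone_sort (g ∘ σ)

theorem sortBy_sortBy {f g : V → β} (hfg : ∀ x y, f x = f y ↔ g x = g y) {σ : Fin n ≃ V}
    (hσ : Monotone (f ∘ σ)) : sortBy f (sortBy g σ) = σ := by
  set π := sort (g ∘ σ)
  have hinv : sort (f ∘ π.trans σ) = π.symm := by
    refine (eq_sort_iff.mpr ⟨?_, fun i j hij he => ?_⟩).symm
    · simpa [Function.comp_def] using hσ
    · have he' : (g ∘ σ) (π (π.symm i)) = (g ∘ σ) (π (π.symm j)) := by simpa [hfg] using he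
      exact (sort_lt_sort_iff_of_eq he').mp (by simpa [π] using hij)
  rw [sortBy, show sortBy g σ = π.trans σ from rfl, hinv]
  ext i
  simp

end Listings

section Friendly

variable {V : Type*} [Fintype V]

theorem Friendly.sortBy {E : Set (V × V)} {f g : V → ℕ+} (hfg : ∀ x y, f x = f y ↔ g x = g y)
    {σ : Fin (Fintype.card V) ≃ V} (hσ : Friendly E f σ) : Friendly E g (sortBy g σ) := by
  refine ⟨monotone_sortBy g σ, fun i h hE => ?_⟩
  set j : Fin (Fintype.card V) := ⟨i + 1, h⟩
  refine ((monotone_sortBy g σ) (show i ≤ j by rw [Fin.le_def]; simp [j])).lt_of_ne fun heq => ?_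
  set π := sort (g ∘ σ)
  have hadj : (π j : ℕ) = π i + 1 :=
    val_apply_eq_succ_of_monotone hσ.1 (fun a b hab => sort_lt_sort_iff_of_eq ((hfg _ _).mp hab))
      rfl ((hfg _ _).mpr heq)
  have h' : (π i : ℕ) + 1 < Fintype.card V := hadj ▸ (π j).isLt
  have hπj : π j = ⟨π i + 1, h'⟩ := Fin.ext hadj
  have hE' : (σ (π i), σ (π j)) ∈ E := hE
  have heq' : g (σ (π i)) = g (σ (π j)) := heq
  rw [hπj] at hE' heq'
  exact (hσ.2 (π i) h' hE').ne ((hfg _ _).mpr heq')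

def friendlyEquiv (E : Set (V × V)) {f g : V → ℕ+} (hfg : ∀ x y, f x = f y ↔ g x = g y) :
    {σ // Friendly E f σ} ≃ {σ // Friendly E g σ} where
  toFun σ := ⟨sortBy g σ, σ.2.sortBy hfg⟩
  invFun τ := ⟨sortBy f τ, τ.2.sortBy fun x y => (hfg x y).symm⟩
  left_inv σ := Subtype.ext (sortBy_sortBy hfg σ.2.1)
  right_inv τ := Subtype.ext (sortBy_sortBy (fun x y => (hfg x y).symm) τ.2.1)

theorem redeiBergeCount_eq_of_fibers (E : Set (V × V)) {f g : V → ℕ+}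
    (hfg : ∀ x y, f x = f y ↔ g x = g y) : redeiBergeCount E f = redeiBergeCount E g :=
  Nat.card_congr (friendlyEquiv E hfg)

end Friendly

/-- The noncommutative Redei–Berge function of any digraph is symmetric: for any digraph
`X = (V, E)`, any coloring `f`, and any permutation `δ` of the positive integers,
`N(f, X) = N(δ ∘ f, X)`. -/
theorem redeiBergeCount_symmetric {V : Type*} [Fintype V] (E : Set (V × V))
    (f : V → ℕ+) (δ : Equiv.Perm ℕ+) :
    redeiBergeCount E f = redeiBergeCount E (δ ∘ f) :=
  redeiBergeCount_eq_of_fibers E fun _ _ => δ.injective.eq_iff.symm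
end

section
/- Tournament expansion: if X = (V, E) is a tournament, then for every coloring f : V → ℤ⁺, N(f, X) = Σ 2^{ψ(σ)}, where the sum is over all permutations σ ∈ 𝕊_V(X) all of whose cycles have odd length and such that f is constant on each cycle of σ, and ψ(σ) is the number of nontrivial cycles of σ. (Equivalently, W_X = Σ_{σ ∈ 𝕊_V(X), all cycles of σ odd} 2^{ψ(σ)} p_{Type(σ)}.) -/
/-- A cycle `c` of a permutation (given as one of its cycle factors, with underlying orbit
`c.support`) is a cycle of the digraph with edge set `E` if `(w, c w) ∈ E` for every
vertex `w` of the cycle. -/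
def IsDigraphCycle {V : Type*} [Fintype V] [DecidableEq V] (E : Set (V × V))
    (c : Equiv.Perm V) : Prop :=
  ∀ w ∈ c.support, (w, c w) ∈ E

/-- `σ ∈ 𝕊_V(X)`: every nontrivial cycle of the permutation `σ` is a cycle of `X`. -/
def MemSVX {V : Type*} [Fintype V] [DecidableEq V] (E : Set (V × V))
    (σ : Equiv.Perm V) : Prop :=
  ∀ c ∈ σ.cycleFactorsFinset, IsDigraphCycle E c


namespace RedeiBerge

open Equiv Equiv.Perm Finset

section MovesAlong

variable {V : Type*} {R T : V → V → Prop} {σ : Perm V}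

def MovesAlong (R : V → V → Prop) (σ : Perm V) : Prop :=
  ∀ x, σ x ≠ x → R x (σ x)

def IsAdmissible (R T : V → V → Prop) (p : Perm V × Perm V) : Prop :=
  p.1.Disjoint p.2 ∧ MovesAlong R p.1 ∧ MovesAlong T p.2

theorem movesAlong_one : MovesAlong R (1 : Perm V) := fun _ hx => absurd rfl hx

theorem movesAlong_congr {R' : V → V → Prop} (h : ∀ x, σ x ≠ x → (R x (σ x) ↔ R' x (σ x))) :
    MovesAlong R σ ↔ MovesAlong R' σ :=
  forall_congr' fun x => ⟨fun hx hσ => (h x hσ).1 (hx hσ), fun hx hσ => (h x hσ).2 (hx hσ)⟩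

theorem MovesAlong.apply_mem {S : Finset V} (hσ : MovesAlong R σ) (hR : ∀ a b, R a b → a ∈ S)
    {x : V} (hx : σ x ≠ x) : σ x ∈ S :=
  hR _ _ (hσ (σ x) fun h => hx (σ.injective h))

theorem MovesAlong.apply_ne {u v : V} (hσ : MovesAlong R σ) (huv : u ≠ v) (hR : ¬R u v) :
    σ u ≠ v :=
  fun hσu => hR (hσu ▸ hσ u (hσu ▸ huv.symm))

theorem movesAlong_inv_iff : MovesAlong R σ⁻¹ ↔ MovesAlong (flip R) σ := by
  refine ⟨fun h x hx => ?_, fun h y hy => ?_⟩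
  · simpa [flip] using h (σ x) (by simpa using hx.symm)
  · simpa [flip] using h (σ⁻¹ y) (by simpa using hy.symm)

theorem movesAlong_mul_iff_of_disjoint {α γ : Perm V} (h : α.Disjoint γ) :
    MovesAlong R (α * γ) ↔ MovesAlong R α ∧ MovesAlong R γ := by
  have hα : ∀ x, γ x = x → (α * γ) x = α x := fun x hx => by rw [mul_apply, hx]
  have hγ : ∀ x, γ x ≠ x → (α * γ) x = γ x := fun x hx =>
    (h (γ x)).resolve_right fun h' => hx (γ.injective h')
  refine ⟨fun hR => ⟨fun x hx => ?_, fun x hx => ?_⟩, fun ⟨hRα, hRγ⟩ x hx => ?_⟩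
  · have hαx := hα x ((h x).resolve_left hx)
    rw [← hαx] at hx ⊢
    exact hR x hx
  · have hγx := hγ x hx
    rw [← hγx] at hx ⊢
    exact hR x hx
  · by_cases hγx : γ x = x
    · rw [hα x hγx] at hx ⊢
      exact hRα x hx
    · rw [hγ x hγx]
      exact hRγ x hγx

theorem isAdmissible_comm {α β : Perm V} : IsAdmissible R T (α, β) ↔ IsAdmissible T R (β, α) :=
  ⟨fun ⟨hd, hα, hβ⟩ => ⟨hd.symm, hβ, hα⟩, fun ⟨hd, hβ, hα⟩ => ⟨hd.symm, hα, hβ⟩⟩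

variable [DecidableEq V] {u v : V}

/-- The relation with `v` merged into `u`: `u` relates to what `v` related to, and `v` is gone. -/
def contractRel (u v : V) (R : V → V → Prop) (a b : V) : Prop :=
  a ≠ v ∧ R (swap u v a) b

theorem contractRel_congr {R' : V → V → Prop} (h : ∀ a b, a ≠ u → (R a b ↔ R' a b)) :
    contractRel u v R = contractRel u v R' := by
  ext a b
  refine and_congr_right fun ha => h _ _ ?_
  rwa [Ne, swap_apply_eq_iff, swap_apply_left]

theorem mul_swap_apply_left (σ : Perm V) : (σ * swap u v) u = σ v := by
  rw [mul_apply, swap_apply_left]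

/-- `σ * swap u v` fixes `v` and sends `u` to `σ v`: it cuts `v` out of the cycle
`… → u → v → σ v → …` of `σ`. -/
theorem movesAlong_and_apply_eq_iff (huv : u ≠ v) (hR : R u v) :
    MovesAlong R σ ∧ σ u = v ↔
      MovesAlong (contractRel u v R) (σ * swap u v) ∧ (σ v = u → R v u) := by
  constructor
  · rintro ⟨hσ, hσu⟩
    have hσv : σ v ≠ v := fun h => huv (σ.injective (hσu.trans h.symm))
    refine ⟨fun x hx => ?_, fun h => h ▸ hσ v hσv⟩
    have hxv : x ≠ v := by
      rintro rfl
      simp [hσu] at hx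
    refine ⟨hxv, hσ _ ?_⟩
    rw [mul_apply] at hx
    by_cases hxu : x = u
    · simpa [hxu] using hσv
    · rwa [swap_apply_of_ne_of_ne hxu hxv] at hx ⊢
  · rintro ⟨hq, hvu⟩
    have hσu : σ u = v := by
      by_contra h
      exact (hq v (by simpa using h)).1 rfl
    refine ⟨fun y hy => ?_, hσu⟩
    by_cases hyu : y = u
    · subst hyu
      rwa [hσu]
    by_cases hqy : (σ * swap u v) (swap u v y) = swap u v y
    · rw [mul_apply, swap_apply_self] at hqy
      by_cases hyv : y = v
      · subst hyv
        rw [swap_apply_right] at hqy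
        rw [hqy]
        exact hvu hqy
      · exact absurd (hqy.trans (swap_apply_of_ne_of_ne hyu hyv)) hy
    · simpa using (hq _ hqy).2

theorem movesAlong_and_fix_iff :
    MovesAlong T σ ∧ σ u = u ∧ σ v = v ↔ MovesAlong (contractRel u v T) σ ∧ σ u = u := by
  constructor
  · rintro ⟨hσ, hσu, hσv⟩
    refine ⟨fun x hx => ?_, hσu⟩
    have hxu : x ≠ u := by rintro rfl; exact hx hσu
    have hxv : x ≠ v := by rintro rfl; exact hx hσv
    exact ⟨hxv, by rw [swap_apply_of_ne_of_ne hxu hxv]; exact hσ x hx⟩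
  · rintro ⟨hσ, hσu⟩
    have hσv : σ v = v := by
      by_contra h
      exact (hσ v h).1 rfl
    refine ⟨fun x hx => ?_, hσu, hσv⟩
    have hxu : x ≠ u := by rintro rfl; exact hx hσu
    have hxv : x ≠ v := by rintro rfl; exact hx hσv
    simpa [contractRel, swap_apply_of_ne_of_ne hxu hxv] using (hσ x hx).2

theorem disjoint_mul_swap_iff {α β : Perm V} (hu : β u = u) (hv : β v = v) :
    (α * swap u v).Disjoint β ↔ α.Disjoint β := by
  refine forall_congr' fun x => ?_
  by_cases hx : x = u ∨ x = v
  · rcases hx with rfl | rfl <;> simp [hu, hv]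
  · push Not at hx
    rw [mul_apply, swap_apply_of_ne_of_ne hx.1 hx.2]

theorem isAdmissible_and_fst_eq_iff (huv : u ≠ v) (hR : R u v) {α β : Perm V} :
    IsAdmissible R T (α, β) ∧ α u = v ↔
      IsAdmissible (contractRel u v R) (contractRel u v T) (α * swap u v, β) ∧ β u = u ∧
        (α v = u → R v u) := by
  constructor
  · rintro ⟨⟨hd, hα, hβ⟩, hαu⟩
    have hβu : β u = u := (hd u).resolve_left (by rw [hαu]; exact huv.symm)
    have hβv : β v = v := (hd v).resolve_left fun h => huv (α.injective (hαu.trans h.symm))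
    obtain ⟨hα', hcond⟩ := (movesAlong_and_apply_eq_iff huv hR).1 ⟨hα, hαu⟩
    exact ⟨⟨(disjoint_mul_swap_iff hβu hβv).2 hd, hα',
      (movesAlong_and_fix_iff.1 ⟨hβ, hβu, hβv⟩).1⟩, hβu, hcond⟩
  · rintro ⟨⟨hd, hα, hβ⟩, hβu, hcond⟩
    obtain ⟨hα', hαu⟩ := (movesAlong_and_apply_eq_iff huv hR).2 ⟨hα, hcond⟩
    obtain ⟨hβ', -, hβv⟩ := movesAlong_and_fix_iff.2 ⟨hβ, hβu⟩
    exact ⟨⟨(disjoint_mul_swap_iff hβu hβv).1 hd, hα', hβ'⟩, hαu⟩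

theorem isAdmissible_and_snd_eq_iff (huv : u ≠ v) (hT : T u v) {α β : Perm V} :
    IsAdmissible R T (α, β) ∧ β u = v ↔
      IsAdmissible (contractRel u v R) (contractRel u v T) (α, β * swap u v) ∧ α u = u ∧
        (β v = u → T v u) := by
  rw [isAdmissible_comm, isAdmissible_comm (R := contractRel u v R)]
  exact isAdmissible_and_fst_eq_iff huv hT

end MovesAlong

section SignedCount

variable {V : Type*} [Fintype V] [DecidableEq V]

open Classical in
noncomputable def signedCount (Q : Perm V × Perm V → Prop) : ℤ :=
  ∑ p, if Q p then (sign p.1 : ℤ) else 0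

theorem signedCount_congr {Q Q' : Perm V × Perm V → Prop} (h : ∀ p, Q p ↔ Q' p) :
    signedCount Q = signedCount Q' := by
  rw [show Q = Q' from funext fun p => propext (h p)]

theorem signedCount_eq_add {Q A B : Perm V × Perm V → Prop} (h : ∀ p, Q p → (A p ↔ ¬B p)) :
    signedCount Q = signedCount (fun p => Q p ∧ A p) + signedCount (fun p => Q p ∧ B p) := by
  unfold signedCount
  rw [← sum_add_distrib]
  refine sum_congr rfl fun p _ => ?_
  by_cases hQ : Q p
  · by_cases hA : A p
    · simp [hQ, hA, (h p hQ).1 hA]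
    · simp [hQ, hA, not_not.1 (mt (h p hQ).2 hA)]
  · simp [hQ]

variable {R T : V → V → Prop} {u v : V}

theorem signedCount_isAdmissible_and_fst_eq (huv : u ≠ v) (hR : R u v) :
    signedCount (fun p => IsAdmissible R T p ∧ p.1 u = v) =
      -signedCount (fun q => IsAdmissible (contractRel u v R) (contractRel u v T) q ∧
        q.2 u = u ∧ (q.1 u = u → R v u)) := by
  unfold signedCount
  rw [← sum_neg_distrib]
  refine Fintype.sum_equiv (Equiv.prodCongr (Equiv.mulRight (swap u v)) (Equiv.refl _)) _ _ ?_
  rintro ⟨α, β⟩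
  rw [show Equiv.prodCongr (Equiv.mulRight (swap u v)) (Equiv.refl _) (α, β) =
    (α * swap u v, β) from rfl]
  beta_reduce
  rw [mul_swap_apply_left]
  have key := isAdmissible_and_fst_eq_iff (T := T) huv hR (α := α) (β := β)
  by_cases h : IsAdmissible R T (α, β) ∧ α u = v
  · rw [if_pos h, if_pos (key.1 h), Perm.sign_mul, sign_swap huv]
    simp
  · rw [if_neg h, if_neg (mt key.2 h), neg_zero]

theorem signedCount_isAdmissible_and_snd_eq (huv : u ≠ v) (hT : T u v) :
    signedCount (fun p => IsAdmissible R T p ∧ p.2 u = v) =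
      signedCount (fun q => IsAdmissible (contractRel u v R) (contractRel u v T) q ∧
        q.1 u = u ∧ (q.2 u = u → T v u)) := by
  unfold signedCount
  refine Fintype.sum_equiv (Equiv.prodCongr (Equiv.refl _) (Equiv.mulRight (swap u v))) _ _ ?_
  rintro ⟨α, β⟩
  rw [show Equiv.prodCongr (Equiv.refl _) (Equiv.mulRight (swap u v)) (α, β) =
    (α, β * swap u v) from rfl]
  beta_reduce
  rw [mul_swap_apply_left]
  have key := isAdmissible_and_snd_eq_iff (R := R) huv hT (α := α) (β := β)
  by_cases h : IsAdmissible R T (α, β) ∧ β u = v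
  · rw [if_pos h, if_pos (key.1 h)]
  · rw [if_neg h, if_neg (mt key.2 h)]

theorem signedCount_isAdmissible_eq_add {P Q : Prop} (hPQ : P ↔ ¬Q) :
    signedCount (IsAdmissible R T) =
      signedCount (fun q => IsAdmissible R T q ∧ q.2 u = u ∧ (q.1 u = u → P)) +
        signedCount (fun q => IsAdmissible R T q ∧ q.1 u = u ∧ (q.2 u = u → Q)) :=
  signedCount_eq_add fun q hq => by
    have := hq.1 u
    by_cases h₁ : q.1 u = u <;> by_cases h₂ : q.2 u = u <;> simp_all

theorem signedCount_isAdmissible_and_snd_ne {R' T' : V → V → Prop} (huv : u ≠ v)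
    (hR : ¬R u v) (hT' : ¬T' u v) (hRR' : ∀ a b, (a, b) ≠ (u, v) → (R a b ↔ R' a b))
    (hTT' : ∀ a b, (a, b) ≠ (u, v) → (T a b ↔ T' a b)) :
    signedCount (fun p => IsAdmissible R T p ∧ p.2 u ≠ v) =
      signedCount (fun p => IsAdmissible R' T' p ∧ p.1 u ≠ v) := by
  have hne : ∀ {σ : Perm V} {x}, σ u ≠ v → σ x ≠ x → (x, σ x) ≠ (u, v) := by
    rintro σ x hσ - h
    obtain ⟨rfl, hxv⟩ := Prod.mk.inj h
    exact hσ hxv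
  refine signedCount_congr fun ⟨α, β⟩ => ⟨?_, ?_⟩
  · rintro ⟨⟨hd, hα, hβ⟩, hβu⟩
    have hαu := hα.apply_ne huv hR
    exact ⟨⟨hd, (movesAlong_congr fun x hx => hRR' _ _ (hne hαu hx)).1 hα,
      (movesAlong_congr fun x hx => hTT' _ _ (hne hβu hx)).1 hβ⟩, hαu⟩
  · rintro ⟨⟨hd, hα, hβ⟩, hαu⟩
    have hβu := hβ.apply_ne huv hT'
    exact ⟨⟨hd, (movesAlong_congr fun x hx => hRR' _ _ (hne hαu hx)).2 hα,
      (movesAlong_congr fun x hx => hTT' _ _ (hne hβu hx)).2 hβ⟩, hβu⟩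

theorem signedCount_isAdmissible_eq_add_contractRel {R' T' : V → V → Prop} (huv : u ≠ v)
    (hR : ¬R u v) (hR' : R' u v) (hT : T u v) (hT' : ¬T' u v)
    (hRR' : ∀ a b, (a, b) ≠ (u, v) → (R a b ↔ R' a b))
    (hTT' : ∀ a b, (a, b) ≠ (u, v) → (T a b ↔ T' a b)) (hvu : R v u ↔ ¬T v u) :
    signedCount (IsAdmissible R T) = signedCount (IsAdmissible R' T') +
      signedCount (IsAdmissible (contractRel u v R) (contractRel u v T)) := by
  have hne : ∀ {a b}, a ≠ u → (a, b) ≠ (u, v) := fun ha h => ha (Prod.mk.inj h).1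
  have hcR : contractRel u v R' = contractRel u v R :=
    (contractRel_congr fun a b ha => hRR' a b (hne ha)).symm
  have hcT : contractRel u v T' = contractRel u v T :=
    (contractRel_congr fun a b ha => hTT' a b (hne ha)).symm
  have hR'vu : R' v u ↔ R v u := (hRR' v u (hne huv.symm)).symm
  rw [signedCount_eq_add (Q := IsAdmissible R T) (A := fun p => p.2 u ≠ v)
      (B := fun p => p.2 u = v) fun _ _ => Iff.rfl,
    signedCount_eq_add (Q := IsAdmissible R' T') (A := fun p => p.1 u ≠ v)
      (B := fun p => p.1 u = v) fun _ _ => Iff.rfl,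
    signedCount_isAdmissible_and_snd_ne huv hR hT' hRR' hTT',
    signedCount_isAdmissible_and_snd_eq huv hT, signedCount_isAdmissible_and_fst_eq huv hR',
    hcR, hcT, signedCount_isAdmissible_eq_add (u := u) hvu]
  simp only [hR'vu]
  ring

open Classical in
theorem sum_sign_eq_zero_of_swap_mul {Q : Perm V → Prop} (huv : u ≠ v)
    (hQ : ∀ σ, Q (swap u v * σ) ↔ Q σ) : ∑ σ, (if Q σ then (sign σ : ℤ) else 0) = 0 := by
  have h := Fintype.sum_equiv (Equiv.mulLeft (swap u v)) (fun σ => if Q σ then (sign σ : ℤ) else 0)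
    (fun σ => -if Q σ then (sign σ : ℤ) else 0) fun σ => by
      show _ = -if Q (swap u v * σ) then (sign (swap u v * σ) : ℤ) else 0
      by_cases hσ : Q σ
      · rw [if_pos hσ, if_pos ((hQ σ).2 hσ), Perm.sign_mul, sign_swap huv]
        simp
      · rw [if_neg hσ, if_neg (mt (hQ σ).1 hσ), neg_zero]
  rw [sum_neg_distrib] at h
  linarith

end SignedCount

section DigraphPairSum

variable {V : Type*} [DecidableEq V] {E : Set (V × V)} {f : V → ℕ+} {S : Finset V} {u v : V}

def edgeRel (E : Set (V × V)) (f : V → ℕ+) (S : Finset V) (a b : V) : Prop :=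
  a ∈ S ∧ f b = f a ∧ (a, b) ∈ E

def nonEdgeRel (E : Set (V × V)) (f : V → ℕ+) (S : Finset V) (a b : V) : Prop :=
  a ∈ S ∧ f b = f a ∧ (a, b) ∉ E

/-- The digraph with `v` merged into `u`: `u` keeps its in-edges and takes over the out-edges
of `v`. The pairs at `v` are meaningless; it is only used on `S.erase v`. -/
def contractEdges (E : Set (V × V)) (u v : V) : Set (V × V) :=
  {e | (swap u v e.1, e.2) ∈ E}

theorem apply_swap_eq_of_eq (hf : f u = f v) (a : V) : f (swap u v a) = f a := by
  rw [swap_apply_def]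
  split_ifs <;> simp [*]

theorem swap_apply_mem_iff (hu : u ∈ S) (hv : v ∈ S) {a : V} : swap u v a ∈ S ↔ a ∈ S := by
  rw [swap_apply_def]
  split_ifs <;> simp [*]

theorem contractRel_edgeRel (hu : u ∈ S) (hv : v ∈ S) (hf : f u = f v) :
    contractRel u v (edgeRel E f S) = edgeRel (contractEdges E u v) f (S.erase v) := by
  ext a b
  simp only [contractRel, edgeRel, contractEdges, Set.mem_ofPred_eq, mem_erase,
    swap_apply_mem_iff hu hv, apply_swap_eq_of_eq hf, and_assoc]

theorem contractRel_nonEdgeRel (hu : u ∈ S) (hv : v ∈ S) (hf : f u = f v) :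
    contractRel u v (nonEdgeRel E f S) = nonEdgeRel (contractEdges E u v) f (S.erase v) := by
  ext a b
  simp only [contractRel, nonEdgeRel, contractEdges, Set.mem_ofPred_eq, mem_erase,
    swap_apply_mem_iff hu hv, apply_swap_eq_of_eq hf, and_assoc]

theorem movesAlong_swap_mul {σ : Perm V} (hu : u ∈ S) (hv : v ∈ S) (hf : f u = f v)
    (hσ : MovesAlong (fun a b => a ∈ S ∧ f b = f a) σ) :
    MovesAlong (fun a b => a ∈ S ∧ f b = f a) (swap u v * σ) := by
  intro x hx
  rw [mul_apply, apply_swap_eq_of_eq hf]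
  by_cases hσx : σ x = x
  · refine ⟨by_contra fun hxS => hx ?_, by rw [hσx]⟩
    rw [mul_apply, hσx, swap_apply_of_ne_of_ne (by rintro rfl; exact hxS hu)
      (by rintro rfl; exact hxS hv)]
  · exact hσ x hσx

variable [Fintype V]

noncomputable def digraphPairSum (E : Set (V × V)) (f : V → ℕ+) (S : Finset V) : ℤ :=
  signedCount (IsAdmissible (edgeRel E f S) (nonEdgeRel E f S))

theorem digraphPairSum_eq_add (hu : u ∈ S) (hv : v ∈ S) (huv : u ≠ v) (hf : f u = f v)
    (hE : (u, v) ∉ E) :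
    digraphPairSum E f S = digraphPairSum (insert (u, v) E) f S +
      digraphPairSum (contractEdges E u v) f (S.erase v) := by
  unfold digraphPairSum
  rw [← contractRel_edgeRel hu hv hf, ← contractRel_nonEdgeRel hu hv hf]
  refine signedCount_isAdmissible_eq_add_contractRel huv (fun h => hE h.2.2)
    ⟨hu, hf.symm, Set.mem_insert _ _⟩ ⟨hu, hf.symm, hE⟩ (fun h => h.2.2 (Set.mem_insert _ _))
    (fun a b hab => ?_) (fun a b hab => ?_) ?_
  · simp [edgeRel, Set.mem_insert_iff, hab]
  · simp [nonEdgeRel, Set.mem_insert_iff, hab]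
  · simp [edgeRel, nonEdgeRel, hv, hf]

theorem digraphPairSum_of_forall_mem (h : ∀ a ∈ S, ∀ b ∈ S, a ≠ b → f a = f b → (a, b) ∈ E) :
    digraphPairSum E f S = if Set.InjOn f S then 1 else 0 := by
  classical
  set C : V → V → Prop := fun a b => a ∈ S ∧ f b = f a
  have hβ : ∀ β : Perm V, MovesAlong (nonEdgeRel E f S) β → β = 1 := by
    refine fun β hβ => Equiv.ext fun x => by_contra fun hx => ?_
    obtain ⟨hxS, hfx, hxE⟩ := hβ x hx
    exact hxE (h x hxS _ (hβ.apply_mem (fun _ _ h => h.1) hx) (Ne.symm hx) hfx.symm)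
  have hα : ∀ α : Perm V, MovesAlong (edgeRel E f S) α ↔ MovesAlong C α := by
    refine fun α => ⟨fun hα x hx => ⟨(hα x hx).1, (hα x hx).2.1⟩, fun hα x hx => ?_⟩
    obtain ⟨hxS, hfx⟩ := hα x hx
    exact ⟨hxS, hfx, h x hxS _ (hα.apply_mem (fun _ _ h => h.1) hx) (Ne.symm hx) hfx.symm⟩
  have hfst : ∀ α : Perm V, (∑ β, if IsAdmissible (edgeRel E f S) (nonEdgeRel E f S) (α, β)
      then (sign (α, β).1 : ℤ) else 0) = if MovesAlong C α then (sign α : ℤ) else 0 := by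
    intro α
    rw [Fintype.sum_eq_single 1 fun β hβ1 => if_neg fun hadm => hβ1 (hβ β hadm.2.2)]
    by_cases hαC : MovesAlong C α
    · rw [if_pos ⟨disjoint_one_right α, (hα α).2 hαC, movesAlong_one⟩, if_pos hαC]
    · rw [if_neg fun hadm => hαC ((hα α).1 hadm.2.1), if_neg hαC]
  rw [digraphPairSum, signedCount, Fintype.sum_prod_type]
  simp only [hfst]
  split_ifs with hinj
  · have hone : ∀ α : Perm V, MovesAlong C α → α = 1 :=
      fun α hαC => Equiv.ext fun x => by_contra fun hx =>
        hx (hinj (hαC.apply_mem (fun _ _ h => h.1) hx) (hαC x hx).1 (hαC x hx).2)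
    rw [Fintype.sum_eq_single 1 fun α hα1 => if_neg fun hαC => hα1 (hone α hαC),
      if_pos movesAlong_one, Perm.sign_one, Units.val_one]
  · obtain ⟨u, hu, v, hv, hf, huv⟩ : ∃ u ∈ S, ∃ v ∈ S, f u = f v ∧ u ≠ v := by
      simpa [Set.InjOn] using hinj
    refine sum_sign_eq_zero_of_swap_mul huv fun σ => ⟨fun h => ?_, movesAlong_swap_mul hu hv hf⟩
    simpa [← mul_assoc] using movesAlong_swap_mul hu hv hf h

end DigraphPairSum

section Listings

variable {V : Type*} {E : Set (V × V)} {f : V → ℕ+} {S : Finset V} {u v : V}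

def friendlyRel (E : Set (V × V)) (f : V → ℕ+) (a b : V) : Prop :=
  f a ≤ f b ∧ ((a, b) ∈ E → f a < f b)

open Classical in
noncomputable def friendlyLists (E : Set (V × V)) (f : V → ℕ+) (S : Finset V) :
    Finset (List V) :=
  (⟨S.val.lists, Multiset.lists_nodup_finset S⟩ : Finset (List V)).filter
    (List.IsChain (friendlyRel E f))

theorem mem_friendlyLists {l : List V} :
    l ∈ friendlyLists E f S ↔ (l : Multiset V) = S.val ∧ l.IsChain (friendlyRel E f) := by
  classical
  rw [friendlyLists, mem_filter, mem_mk, Multiset.mem_lists_iff, Multiset.quot_mk_to_coe, eq_comm]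

theorem nodup_of_coe_eq {l : List V} (h : (l : Multiset V) = S.val) : l.Nodup := by
  rw [← Multiset.coe_nodup, h]
  exact S.nodup

theorem mem_of_coe_eq {l : List V} (h : (l : Multiset V) = S.val) {a : V} (ha : a ∈ l) :
    a ∈ S := by
  rw [← mem_val, ← h]
  exact ha

theorem friendly_iff_isChain [Fintype V] {σ : Fin (Fintype.card V) ≃ V} :
    Friendly E f σ ↔ (List.ofFn σ).IsChain (friendlyRel E f) := by
  rw [List.isChain_ofFn]
  constructor
  · rintro ⟨hmono, hE⟩ i hi
    exact ⟨hmono (Fin.mk_le_mk.2 (Nat.le_succ i)), hE ⟨i, _⟩ hi⟩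
  · intro h
    refine ⟨?_, fun i hi => (h i hi).2⟩
    rw [← List.sortedLE_ofFn_iff, List.sortedLE_iff_isChain, List.isChain_ofFn]
    exact fun i hi => (h i hi).1

theorem redeiBergeCount_eq_card_friendlyLists [Fintype V] :
    redeiBergeCount E f = (friendlyLists E f univ).card := by
  classical
  rw [redeiBergeCount, Nat.card_eq_fintype_card, Fintype.card_subtype]
  refine card_bij (fun σ _ => List.ofFn σ) (fun σ hσ => ?_) (fun σ₁ _ σ₂ _ h => ?_) fun l hl => ?_
  · refine mem_friendlyLists.2 ⟨?_, friendly_iff_isChain.1 (mem_filter.1 hσ).2⟩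
    refine (Multiset.Nodup.ext (Multiset.coe_nodup.2 (List.nodup_ofFn.2 σ.injective))
      univ.nodup).2 fun x => ?_
    simpa [List.mem_ofFn] using σ.surjective x
  · exact Equiv.coe_inj.1 (List.ofFn_injective h)
  · obtain ⟨hl, hchain⟩ := mem_friendlyLists.1 hl
    have hmem : ∀ x, x ∈ l := fun x => by rw [← Multiset.mem_coe, hl]; exact mem_univ_val x
    have hlen : l.length = Fintype.card V := by rw [← Multiset.coe_card, hl]; rfl
    have hσ : List.ofFn ((finCongr hlen).symm.trans
        ((nodup_of_coe_eq hl).getEquivOfForallMemList l hmem)) = l :=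
      (List.ofFn_congr hlen l.get).symm.trans (List.ofFn_get l)
    exact ⟨_, mem_filter.2 ⟨mem_univ _, friendly_iff_isChain.2 (hσ.symm ▸ hchain)⟩, hσ⟩

theorem isChain_friendlyRel_insert_iff (hf : f u = f v) {l : List V} :
    l.IsChain (friendlyRel (insert (u, v) E) f) ↔
      l.IsChain (friendlyRel E f) ∧ ¬[u, v] <:+: l := by
  simp only [List.isChain_iff_forall_rel_of_append_cons_cons (l := l)]
  constructor
  · refine fun h => ⟨fun a b l₁ l₂ hl => ?_, fun ⟨s, t, hst⟩ => ?_⟩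
    · exact ⟨(h hl).1, fun hab => (h hl).2 (Set.mem_insert_of_mem _ hab)⟩
    · exact ((h (l₁ := s) (l₂ := t) (by simp [← hst])).2 (Set.mem_insert _ _)).ne hf
  · rintro ⟨h, hinf⟩ a b l₁ l₂ hl
    refine ⟨(h hl).1, fun hab => ?_⟩
    rcases Set.mem_insert_iff.1 hab with hab | hab
    · obtain ⟨rfl, rfl⟩ := Prod.mk.inj hab
      exact absurd ⟨l₁, l₂, by simp [hl]⟩ hinf
    · exact (h hl).2 hab

theorem exists_eq_append_cons_cons_of_isInfix {l : List V} (hl : l.Nodup) (h : [u, v] <:+: l) :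
    ∃ s t, l = s ++ u :: v :: t ∧ u ∉ s ++ t ∧ v ∉ s ++ t := by
  obtain ⟨s, t, rfl⟩ := h
  have hl' : (s ++ u :: v :: t).Nodup := by simpa using hl
  rw [List.nodup_middle, List.nodup_cons, List.nodup_middle, List.nodup_cons] at hl'
  refine ⟨s, t, by simp, fun hu => hl'.1 ?_, hl'.2.1⟩
  simp only [List.mem_append, List.mem_cons] at hu ⊢
  tauto

theorem card_friendlyLists_of_forall_mem
    (h : ∀ a ∈ S, ∀ b ∈ S, a ≠ b → f a = f b → (a, b) ∈ E) :
    (friendlyLists E f S).card = if Set.InjOn f S then 1 else 0 := by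
  have hmem : ∀ l, l ∈ friendlyLists E f S ↔
      (l : Multiset V) = S.val ∧ l.Pairwise fun a b => f a < f b := by
    refine fun l => mem_friendlyLists.trans (and_congr_right fun hl => ⟨fun hc => ?_, fun hp => ?_⟩)
    · rw [← List.pairwise_map (R := (· < ·)), ← List.isChain_iff_pairwise, List.isChain_map,
        List.isChain_iff_forall_rel_of_append_cons_cons]
      intro a b l₁ l₂ hl'
      have hab : a ≠ b := fun he => (List.nodup_cons.1 (List.nodup_middle.1
        (hl' ▸ nodup_of_coe_eq hl))).1 (by simp [he])
      have haS : a ∈ S := mem_of_coe_eq hl (by simp [hl'])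
      have hbS : b ∈ S := mem_of_coe_eq hl (by simp [hl'])
      have hrel := List.isChain_iff_forall_rel_of_append_cons_cons.1 hc hl'
      exact lt_of_le_of_ne hrel.1 fun he => (hrel.2 (h a haS b hbS hab he)).ne he
    · exact hp.isChain.imp fun a b hab => ⟨hab.le, fun _ => hab⟩
  split_ifs with hinj
  · set l₀ := S.toList.mergeSort fun a b => decide (f a ≤ f b)
    have hl₀ : (l₀ : Multiset V) = S.val :=
      (Multiset.coe_eq_coe.2 (List.mergeSort_perm _ _)).trans (coe_toList S)
    have hsorted : l₀.Pairwise fun a b => f a < f b := by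
      refine ((List.pairwise_mergeSort (fun a b c hab hbc => ?_) (fun a b => ?_) _).and
        (nodup_of_coe_eq hl₀)).imp_of_mem fun ha hb ⟨hle, hne⟩ =>
          lt_of_le_of_ne (by simpa using hle)
            fun he => hne (hinj (mem_of_coe_eq hl₀ ha) (mem_of_coe_eq hl₀ hb) he)
      · simp only [decide_eq_true_eq] at hab hbc ⊢
        exact hab.trans hbc
      · simpa using le_total (f a) (f b)
    refine card_eq_one.2 ⟨l₀, eq_singleton_iff_unique_mem.2 ⟨(hmem l₀).2 ⟨hl₀, hsorted⟩,
      fun l hl => ?_⟩⟩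
    obtain ⟨hlS, hlsorted⟩ := (hmem l).1 hl
    exact List.Perm.eq_of_pairwise (fun a b _ _ hab hba => absurd (hab.trans hba) (lt_irrefl _))
      hlsorted hsorted (Multiset.coe_eq_coe.1 (hlS.trans hl₀.symm))
  · refine card_eq_zero.2 (eq_empty_iff_forall_notMem.2 fun l hl => hinj ?_)
    obtain ⟨hlS, hsorted⟩ := (hmem l).1 hl
    have hmem' : ∀ {a}, a ∈ S → a ∈ l := fun ha => by rw [← Multiset.mem_coe, hlS]; exact ha
    exact fun a ha b hb he => List.inj_on_of_nodup_map (List.pairwise_map.2 hsorted).nodup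
      (hmem' ha) (hmem' hb) he

variable [DecidableEq V]

theorem friendlyRel_contractEdges (hf : f u = f v) :
    friendlyRel (contractEdges E u v) f = fun a b => friendlyRel E f (swap u v a) b := by
  ext a b
  simp [friendlyRel, contractEdges, apply_swap_eq_of_eq hf]

theorem isChain_append_cons_cons_iff {R : V → V → Prop} {s t : List V} (hu : u ∉ s ++ t)
    (hv : v ∉ s ++ t) :
    (s ++ u :: v :: t).IsChain R ↔ R u v ∧ (s ++ u :: t).IsChain fun a b => R (swap u v a) b := by
  have hswap : ∀ a ∈ s ++ t, swap u v a = a := fun a ha =>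
    swap_apply_of_ne_of_ne (by rintro rfl; exact hu ha) (by rintro rfl; exact hv ha)
  have hcongr : ∀ l : List V, (∀ a ∈ l, a ∈ s ++ t) →
      (l.IsChain R ↔ l.IsChain fun a b => R (swap u v a) b) := fun l hl =>
    List.IsChain.iff_of_mem_imp fun a b ha _ => by rw [hswap a (hl a ha)]
  have hlast : ∀ x ∈ s.getLast?, (R x u ↔ R (swap u v x) u) := fun x hx => by
    rw [hswap x (List.mem_append_left _ (List.mem_of_mem_getLast? hx))]
  rw [List.isChain_append, List.isChain_append, List.isChain_cons_cons, List.isChain_cons,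
    List.isChain_cons, hcongr s fun a ha => List.mem_append_left _ ha,
    hcongr t fun a ha => List.mem_append_right _ ha, swap_apply_left]
  simp only [List.head?_cons, Option.mem_def, Option.some.injEq, forall_eq']
  constructor
  · rintro ⟨h₁, ⟨h₂, h₃, h₄⟩, h₅⟩
    exact ⟨h₂, h₁, ⟨h₃, h₄⟩, fun x hx => (hlast x hx).1 (h₅ x hx)⟩
  · rintro ⟨h₂, h₁, ⟨h₃, h₄⟩, h₅⟩
    exact ⟨h₁, ⟨h₂, h₃, h₄⟩, fun x hx => (hlast x hx).2 (h₅ x hx)⟩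

theorem erase_append_cons_cons {s t : List V} (huv : u ≠ v) (hv : v ∉ s) :
    (s ++ u :: v :: t).erase v = s ++ u :: t := by
  rw [List.erase_append_right _ hv, List.erase_cons_tail (by simpa using huv),
    List.erase_cons_head]

end Listings

section Recurrence

variable {V : Type*} [DecidableEq V] {E : Set (V × V)} {f : V → ℕ+} {S : Finset V} {u v : V}

theorem card_filter_isInfix_friendlyLists (hu : u ∈ S) (hv : v ∈ S) (huv : u ≠ v)
    (hf : f u = f v) (hE : (u, v) ∉ E) :
    ((friendlyLists E f S).filter ([u, v] <:+: ·)).card =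
      (friendlyLists (contractEdges E u v) f (S.erase v)).card := by
  have hdecomp : ∀ l ∈ (friendlyLists E f S).filter ([u, v] <:+: ·),
      ∃ s t, l = s ++ u :: v :: t ∧ u ∉ s ++ t ∧ v ∉ s ++ t := fun l hl =>
    exists_eq_append_cons_cons_of_isInfix
      (nodup_of_coe_eq (mem_friendlyLists.1 (mem_filter.1 hl).1).1) (mem_filter.1 hl).2
  refine card_bij (fun l _ => l.erase v) (fun l hl => ?_) (fun l₁ hl₁ l₂ hl₂ h => ?_)
    fun m hm => ?_
  · obtain ⟨s, t, rfl, hut, hvt⟩ := hdecomp l hl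
    obtain ⟨hlS, hchain⟩ := mem_friendlyLists.1 (mem_filter.1 hl).1
    rw [mem_friendlyLists, friendlyRel_contractEdges hf, erase_val, ← hlS, Multiset.coe_erase,
      erase_append_cons_cons huv fun h => hvt (List.mem_append_left _ h)]
    exact ⟨rfl, ((isChain_append_cons_cons_iff hut hvt).1 hchain).2⟩
  · obtain ⟨s₁, t₁, rfl, hu₁, hv₁⟩ := hdecomp l₁ hl₁
    obtain ⟨s₂, t₂, rfl, -, hv₂⟩ := hdecomp l₂ hl₂
    rw [erase_append_cons_cons huv fun h => hv₁ (List.mem_append_left _ h),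
      erase_append_cons_cons huv fun h => hv₂ (List.mem_append_left _ h)] at h
    obtain ⟨rfl, -, rfl⟩ := (List.append_cons_inj_of_notMem
      (fun h => hu₁ (List.mem_append_left _ h)) (fun h => hu₁ (List.mem_append_right _ h))).1 h
    rfl
  · obtain ⟨hmS, hchain⟩ := mem_friendlyLists.1 hm
    have hvm : v ∉ m := fun h => by
      rw [← Multiset.mem_coe, hmS, mem_val] at h
      simp at h
    obtain ⟨s, t, rfl⟩ := List.append_of_mem
      (show u ∈ m by rw [← Multiset.mem_coe, hmS]; exact mem_erase.2 ⟨huv, hu⟩)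
    have hut : u ∉ s ++ t := (List.nodup_cons.1 (List.nodup_middle.1 (nodup_of_coe_eq hmS))).1
    have hvt : v ∉ s ++ t := fun h => hvm (by
      simp only [List.mem_append, List.mem_cons] at h ⊢
      tauto)
    rw [friendlyRel_contractEdges hf] at hchain
    refine ⟨s ++ u :: v :: t, mem_filter.2 ⟨mem_friendlyLists.2 ⟨?_, ?_⟩, ⟨s, t, by simp⟩⟩,
      erase_append_cons_cons huv fun h => hvt (List.mem_append_left _ h)⟩
    · rw [← Multiset.cons_erase (mem_def.1 hv), ← erase_val, ← hmS, Multiset.cons_coe,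
        Multiset.coe_eq_coe]
      simpa using List.perm_middle (l₁ := s ++ [u]) (l₂ := t) (a := v)
    · exact (isChain_append_cons_cons_iff hut hvt).2 ⟨⟨hf.le, fun h => absurd h hE⟩, hchain⟩

theorem card_friendlyLists_eq_add (hu : u ∈ S) (hv : v ∈ S) (huv : u ≠ v) (hf : f u = f v)
    (hE : (u, v) ∉ E) :
    (friendlyLists E f S).card =
      (friendlyLists (insert (u, v) E) f S).card +
        (friendlyLists (contractEdges E u v) f (S.erase v)).card := by
  rw [← card_filter_add_card_filter_not (s := friendlyLists E f S) ([u, v] <:+: ·), add_comm,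
    card_filter_isInfix_friendlyLists hu hv huv hf hE]
  congr 2
  ext l
  simp only [mem_filter, mem_friendlyLists, isChain_friendlyRel_insert_iff hf, and_assoc]

open Classical in
noncomputable def missingPairs (E : Set (V × V)) (f : V → ℕ+) (S : Finset V) :
    Finset (V × V) :=
  (S ×ˢ S).filter fun e => e.1 ≠ e.2 ∧ f e.1 = f e.2 ∧ e ∉ E

theorem card_missingPairs_insert_lt (hu : u ∈ S) (hv : v ∈ S) (huv : u ≠ v) (hf : f u = f v)
    (hE : (u, v) ∉ E) : (missingPairs (insert (u, v) E) f S).card < (missingPairs E f S).card := by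
  refine card_lt_card ((ssubset_iff_of_subset fun e he => ?_).2 ⟨(u, v), ?_, ?_⟩)
  · simp only [missingPairs, mem_filter, Set.mem_insert_iff, not_or] at he ⊢
    exact ⟨he.1, he.2.1, he.2.2.1, he.2.2.2.2⟩
  · simp [missingPairs, hu, hv, huv, hf, hE]
  · simp [missingPairs]

theorem card_friendlyLists_eq_digraphPairSum [Fintype V] (E : Set (V × V)) (f : V → ℕ+)
    (S : Finset V) : ((friendlyLists E f S).card : ℤ) = digraphPairSum E f S := by
  by_cases h : ∃ u ∈ S, ∃ v ∈ S, u ≠ v ∧ f u = f v ∧ (u, v) ∉ E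
  · obtain ⟨u, hu, v, hv, huv, hf, hE⟩ := h
    rw [card_friendlyLists_eq_add hu hv huv hf hE, digraphPairSum_eq_add hu hv huv hf hE,
      Nat.cast_add, card_friendlyLists_eq_digraphPairSum (insert (u, v) E) f S,
      card_friendlyLists_eq_digraphPairSum (contractEdges E u v) f (S.erase v)]
  · push Not at h
    rw [card_friendlyLists_of_forall_mem h, digraphPairSum_of_forall_mem h]
    split_ifs <;> rfl
termination_by (S.card, (missingPairs E f S).card)
decreasing_by
  · exact Prod.Lex.right _ (card_missingPairs_insert_lt hu hv huv hf hE)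
  · exact Prod.Lex.left _ _ (card_erase_lt_of_mem hv)

end Recurrence

section CycleFactors

variable {V : Type*} [Fintype V] [DecidableEq V]

def cycleFactorsProd (σ : Perm V) (p : Perm V → Prop) [DecidablePred p] : Perm V :=
  (σ.cycleFactorsFinset.filter p).noncommProd id
    ((cycleFactorsFinset_mem_commute σ).mono (coe_subset.2 (filter_subset p _)))

section

variable (σ : Perm V) (p : Perm V → Prop) [DecidablePred p]

theorem cycleFactorsFinset_cycleFactorsProd :
    (cycleFactorsProd σ p).cycleFactorsFinset = σ.cycleFactorsFinset.filter p :=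
  cycleFactorsFinset_eq_finset.2 ⟨fun _ hc => (mem_cycleFactorsFinset_iff.1 (mem_filter.1 hc).1).1,
    (cycleFactorsFinset_pairwise_disjoint σ).mono (coe_subset.2 (filter_subset p _)), rfl⟩

theorem cycleFactorsProd_mul_cycleFactorsProd_not :
    cycleFactorsProd σ p * cycleFactorsProd σ (¬p ·) = σ := by
  rw [cycleFactorsProd, cycleFactorsProd, ← noncommProd_union_of_disjoint
    (disjoint_filter_filter_not _ _ p) id ((cycleFactorsFinset_mem_commute σ).mono
      (coe_subset.2 (union_subset (filter_subset _ _) (filter_subset _ _)))),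
    noncommProd_congr (filter_union_filter_not_eq p _) fun _ _ => rfl]
  exact cycleFactorsFinset_noncommProd σ

theorem disjoint_cycleFactorsProd_not :
    (cycleFactorsProd σ p).Disjoint (cycleFactorsProd σ (¬p ·)) :=
  disjoint_noncommProd_right _ fun _ hd => (disjoint_noncommProd_right _ fun _ hc =>
    cycleFactorsFinset_pairwise_disjoint σ (mem_filter.1 hd).1 (mem_filter.1 hc).1
      fun h => (mem_filter.1 hd).2 (h ▸ (mem_filter.1 hc).2)).symm

theorem sign_cycleFactorsProd :
    sign (cycleFactorsProd σ p) = ∏ c ∈ σ.cycleFactorsFinset.filter p, sign c := by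
  rw [cycleFactorsProd, map_noncommProd, noncommProd_eq_prod]
  rfl

end

theorem cycleFactorsProd_mul_of_disjoint {α γ : Perm V} (h : α.Disjoint γ) :
    cycleFactorsProd (α * γ) (· ∈ α.cycleFactorsFinset) = α ∧
      cycleFactorsProd (α * γ) (· ∉ α.cycleFactorsFinset) = γ := by
  have hcf := h.cycleFactorsFinset_mul_eq_union
  have hdisj := h.disjoint_cycleFactorsFinset
  constructor
  · rw [cycleFactorsProd, noncommProd_congr (s₂ := α.cycleFactorsFinset) (by
      ext c; simp only [mem_filter, hcf, mem_union]; tauto) fun _ _ => rfl]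
    exact cycleFactorsFinset_noncommProd α
  · rw [cycleFactorsProd, noncommProd_congr (s₂ := γ.cycleFactorsFinset) (by
      ext c; simp only [mem_filter, hcf, mem_union]
      exact ⟨fun h' => h'.1.resolve_left h'.2, fun h' => ⟨Or.inr h', disjoint_right.1 hdisj h'⟩⟩)
      fun _ _ => rfl]
    exact cycleFactorsFinset_noncommProd γ

open Classical in
theorem sum_disjoint_eq_sum_powerset {M : Type*} [AddCommMonoid M] (g : Perm V → Perm V → M) :
    ∑ q ∈ univ.filter (fun q : Perm V × Perm V => q.1.Disjoint q.2), g q.1 q.2 =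
      ∑ σ : Perm V, ∑ T ∈ σ.cycleFactorsFinset.powerset,
        g (cycleFactorsProd σ (· ∈ T)) (cycleFactorsProd σ (· ∉ T)) := by
  rw [← sum_sigma univ (fun σ => σ.cycleFactorsFinset.powerset)
    fun x => g (cycleFactorsProd x.1 (· ∈ x.2)) (cycleFactorsProd x.1 (· ∉ x.2))]
  refine sum_nbij' (fun q => ⟨q.1 * q.2, q.1.cycleFactorsFinset⟩)
    (fun x => (cycleFactorsProd x.1 (· ∈ x.2), cycleFactorsProd x.1 (· ∉ x.2)))
    (fun q hq => ?_) (fun x _ => ?_) (fun q hq => ?_) (fun x hx => ?_) (fun q hq => ?_)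
  · rw [mem_sigma, mem_powerset, (mem_filter.1 hq).2.cycleFactorsFinset_mul_eq_union]
    exact ⟨mem_univ _, subset_union_left⟩
  · exact mem_filter.2 ⟨mem_univ _, disjoint_cycleFactorsProd_not _ _⟩
  · obtain ⟨h₁, h₂⟩ := cycleFactorsProd_mul_of_disjoint (mem_filter.1 hq).2
    exact Prod.ext h₁ h₂
  · obtain ⟨-, hT⟩ := mem_sigma.1 hx
    refine Sigma.ext (cycleFactorsProd_mul_cycleFactorsProd_not _ _) (heq_of_eq ?_)
    rw [cycleFactorsFinset_cycleFactorsProd, filter_mem_eq_inter,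
      inter_eq_right.2 (mem_powerset.1 hT)]
  · obtain ⟨h₁, h₂⟩ := cycleFactorsProd_mul_of_disjoint (mem_filter.1 hq).2
    rw [h₁, h₂]

theorem one_add_sign_of_isCycle {c : Perm V} (hc : c.IsCycle) :
    1 + (sign c : ℤ) = if Odd c.support.card then 2 else 0 := by
  rw [hc.sign]
  split_ifs with h
  · rw [Units.val_neg, h.neg_one_pow]
    norm_num
  · rw [Units.val_neg, (Nat.not_odd_iff_even.1 h).neg_one_pow]
    norm_num

theorem sum_powerset_prod_sign (σ : Perm V) :
    ∑ T ∈ σ.cycleFactorsFinset.powerset, ∏ c ∈ T, (sign c : ℤ) =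
      if ∀ c ∈ σ.cycleFactorsFinset, Odd c.support.card then 2 ^ σ.cycleFactorsFinset.card
      else 0 := by
  rw [← prod_one_add, prod_congr rfl fun c hc =>
    one_add_sign_of_isCycle (mem_cycleFactorsFinset_iff.1 hc).1, prod_ite_zero, prod_const]
  congr 1

end CycleFactors

section Tournament

variable {V : Type*} [Fintype V] {E : Set (V × V)} {f : V → ℕ+}

theorem movesAlong_nonEdgeRel_univ_iff (htour : ∀ u v : V, u ≠ v → ((u, v) ∈ E ↔ (v, u) ∉ E))
    {β : Perm V} : MovesAlong (nonEdgeRel E f univ) β ↔ MovesAlong (edgeRel E f univ) β⁻¹ := by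
  rw [movesAlong_inv_iff]
  refine movesAlong_congr fun x hx => ?_
  simp only [nonEdgeRel, edgeRel, flip, mem_univ, true_and, htour _ _ (Ne.symm hx), not_not]
  exact and_congr_left' eq_comm

variable [DecidableEq V]

theorem memSVX_iff {σ : Perm V} : MemSVX E σ ↔ ∀ w, σ w ≠ w → (w, σ w) ∈ E := by
  constructor
  · intro h w hw
    obtain ⟨c, hc, hwc⟩ :=
      mem_support_iff_mem_support_of_mem_cycleFactorsFinset.1 (mem_support.2 hw)
    rw [← (mem_cycleFactorsFinset_iff.1 hc).2 w hwc]
    exact h c hc w hwc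
  · intro h c hc w hw
    rw [(mem_cycleFactorsFinset_iff.1 hc).2 w hw]
    exact h w (mem_support.1 (mem_cycleFactorsFinset_support_le hc hw))

theorem movesAlong_edgeRel_univ_iff {σ : Perm V} :
    MovesAlong (edgeRel E f univ) σ ↔ MemSVX E σ ∧ ∀ w, f (σ w) = f w := by
  rw [memSVX_iff]
  refine ⟨fun h => ⟨fun w hw => (h w hw).2.2, fun w => ?_⟩,
    fun h x hx => ⟨mem_univ _, h.2 x, h.1 x hx⟩⟩
  by_cases hw : σ w = w
  · rw [hw]
  · exact (h w hw).2.1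

open Classical in
theorem digraphPairSum_univ_eq_sum_disjoint
    (htour : ∀ u v : V, u ≠ v → ((u, v) ∈ E ↔ (v, u) ∉ E)) :
    digraphPairSum E f univ = ∑ q ∈ univ.filter (fun q : Perm V × Perm V => q.1.Disjoint q.2),
      if MovesAlong (edgeRel E f univ) (q.1 * q.2) then (sign q.1 : ℤ) else 0 := by
  rw [digraphPairSum, signedCount, sum_filter]
  refine Fintype.sum_equiv (Equiv.prodCongr (Equiv.refl _) (Equiv.inv _)) _ _ fun ⟨α, β⟩ => ?_
  rw [show Equiv.prodCongr (Equiv.refl _) (Equiv.inv _) (α, β) = (α, β⁻¹) from rfl]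
  dsimp only
  have key : IsAdmissible (edgeRel E f univ) (nonEdgeRel E f univ) (α, β) ↔
      α.Disjoint β⁻¹ ∧ MovesAlong (edgeRel E f univ) (α * β⁻¹) := by
    rw [IsAdmissible, movesAlong_nonEdgeRel_univ_iff htour, disjoint_inv_right_iff]
    exact and_congr_right fun hd =>
      (movesAlong_mul_iff_of_disjoint (disjoint_inv_right_iff.2 hd)).symm
  by_cases h : IsAdmissible (edgeRel E f univ) (nonEdgeRel E f univ) (α, β)
  · rw [if_pos h, if_pos (key.1 h).1, if_pos (key.1 h).2]
  · by_cases hd : α.Disjoint β⁻¹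
    · rw [if_neg h, if_pos hd, if_neg fun h' => h (key.2 ⟨hd, h'⟩)]
    · rw [if_neg h, if_neg hd]

open Classical in
theorem digraphPairSum_univ_of_tournament
    (htour : ∀ u v : V, u ≠ v → ((u, v) ∈ E ↔ (v, u) ∉ E)) :
    digraphPairSum E f univ =
      ∑ σ : Perm V,
        if MemSVX E σ ∧ (∀ c ∈ σ.cycleFactorsFinset, Odd c.support.card) ∧
            (∀ w : V, f (σ w) = f w)
        then (2 : ℤ) ^ σ.cycleFactorsFinset.card else 0 := by
  rw [digraphPairSum_univ_eq_sum_disjoint htour, sum_disjoint_eq_sum_powerset fun α γ =>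
    if MovesAlong (edgeRel E f univ) (α * γ) then (sign α : ℤ) else 0]
  refine sum_congr rfl fun σ _ => ?_
  have hsign : ∀ T ∈ σ.cycleFactorsFinset.powerset,
      (sign (cycleFactorsProd σ (· ∈ T)) : ℤ) = ∏ c ∈ T, (sign c : ℤ) := fun T hT => by
    rw [sign_cycleFactorsProd, filter_mem_eq_inter, inter_eq_right.2 (mem_powerset.1 hT)]
    push_cast
    rfl
  simp only [cycleFactorsProd_mul_cycleFactorsProd_not]
  by_cases hσ : MovesAlong (edgeRel E f univ) σ
  · rw [sum_congr rfl fun T hT => (if_pos hσ).trans (hsign T hT), sum_powerset_prod_sign]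
    obtain ⟨hSVX, hf⟩ := movesAlong_edgeRel_univ_iff.1 hσ
    by_cases hodd : ∀ c ∈ σ.cycleFactorsFinset, Odd c.support.card
    · rw [if_pos hodd, if_pos ⟨hSVX, hodd, hf⟩]
    · rw [if_neg hodd, if_neg fun h => hodd h.2.1]
  · rw [sum_congr rfl fun T _ => if_neg hσ, sum_const_zero,
      if_neg fun h => hσ (movesAlong_edgeRel_univ_iff.2 ⟨h.1, h.2.2⟩)]

end Tournament

end RedeiBerge

open Classical in
theorem redeiBergeCount_tournament_expansion_general {V : Type*} [Fintype V] [DecidableEq V]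
    (E : Set (V × V))
    (htour : ∀ u v : V, u ≠ v → ((u, v) ∈ E ↔ (v, u) ∉ E))
    (f : V → ℕ+) :
    redeiBergeCount E f =
      ∑ σ : Equiv.Perm V,
        if MemSVX E σ ∧ (∀ c ∈ σ.cycleFactorsFinset, Odd c.support.card) ∧
            (∀ w : V, f (σ w) = f w)
        then 2 ^ σ.cycleFactorsFinset.card else 0 := by
  have h := (RedeiBerge.card_friendlyLists_eq_digraphPairSum E f Finset.univ).trans
    (RedeiBerge.digraphPairSum_univ_of_tournament htour)
  rw [← RedeiBerge.redeiBergeCount_eq_card_friendlyLists] at h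
  exact_mod_cast h

open Classical in
/-- Tournament expansion: if `X = (V, E)` is a tournament, then for every coloring `f`,
`N(f, X) = Σ 2^{ψ(σ)}`, summed over all permutations `σ ∈ 𝕊_V(X)` all of whose cycles
have odd length (fixed points have length 1, hence are always odd) and such that `f` is
constant on each cycle of `σ`; here `ψ(σ)` is the number of nontrivial cycles of `σ`. -/
theorem redeiBergeCount_tournament_expansion {V : Type*} [Fintype V] [DecidableEq V]
    (E : Set (V × V))
    (hloopless : ∀ v : V, (v, v) ∉ E)
    (htour : ∀ u v : V, u ≠ v → ((u, v) ∈ E ↔ (v, u) ∉ E))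
    (f : V → ℕ+) :
    redeiBergeCount E f =
      ∑ σ : Equiv.Perm V,
        if MemSVX E σ ∧ (∀ c ∈ σ.cycleFactorsFinset, Odd c.support.card) ∧
            (∀ w : V, f (σ w) = f w)
        then 2 ^ σ.cycleFactorsFinset.card else 0 :=
  redeiBergeCount_tournament_expansion_general E htour f
end

section
/- Let X = (V, E) be a digraph and F ⊆ E such that the digraph (V, F) is not a disjoint union of directed paths. Then for every coloring f : V → ℤ⁺: N(f, X) = Σ_{S ⊆ F, S ≠ ∅} (−1)^{|S|−1} N(f, X∖S), where X∖S = (V, E∖S). -/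
/-- A digraph `(V, F)` is a disjoint union of directed paths if every vertex has at most
one outgoing and at most one incoming edge, and `F` contains no directed cycle. -/
def IsDisjointUnionOfPaths {V : Type*} (F : Set (V × V)) : Prop :=
  (∀ u v w : V, (u, v) ∈ F → (u, w) ∈ F → v = w) ∧
  (∀ u v w : V, (u, w) ∈ F → (v, w) ∈ F → u = v) ∧
  ¬ ∃ k : ℕ, ∃ hk : 0 < k, ∃ c : Fin k → V, Function.Injective c ∧
      ∀ i : Fin k, (c i, c ⟨((i : ℕ) + 1) % k, Nat.mod_lt _ hk⟩) ∈ F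

/-- If every edge of `F` occurs as a consecutive pair in the listing `σ`,
then `F` is a disjoint union of directed paths. -/
lemma aux_paths {V : Type*} [Fintype V] (F : Finset (V × V)) (σ : Fin (Fintype.card V) ≃ V)
    (h : ∀ e ∈ F, ∃ i : Fin (Fintype.card V), ∃ hh : (i : ℕ) + 1 < Fintype.card V,
      σ i = e.1 ∧ σ ⟨(i : ℕ) + 1, hh⟩ = e.2) :
    IsDisjointUnionOfPaths (F : Set (V × V)) := by
  refine ⟨?_, ?_, ?_⟩
  · intro u v w huv huw
    obtain ⟨i, hi, hi1, hi2⟩ := h _ huv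
    obtain ⟨j, hj, hj1, hj2⟩ := h _ huw
    have hij : i = j := σ.injective (hi1.trans hj1.symm)
    subst hij
    exact hi2.symm.trans hj2
  · intro u v w huw hvw
    obtain ⟨i, hi, hi1, hi2⟩ := h _ huw
    obtain ⟨j, hj, hj1, hj2⟩ := h _ hvw
    have : (⟨(i : ℕ) + 1, hi⟩ : Fin _) = ⟨(j : ℕ) + 1, hj⟩ := σ.injective (hi2.trans hj2.symm)
    have hij : i = j := by
      have := Fin.mk.injEq .. ▸ this
      exact Fin.ext (by omega)
    subst hij
    exact hi1.symm.trans hj1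
  · rintro ⟨k, hk, c, hcinj, hc⟩
    have key : ∀ i : Fin k,
        ((σ.symm (c ⟨((i : ℕ) + 1) % k, Nat.mod_lt _ hk⟩) : Fin _) : ℕ)
          = ((σ.symm (c i) : Fin _) : ℕ) + 1 := by
      intro i
      obtain ⟨j, hj, hj1, hj2⟩ := h _ (hc i)
      have e1 : c i = σ j := hj1.symm
      have e2 : c ⟨((i : ℕ) + 1) % k, Nat.mod_lt _ hk⟩ = σ ⟨(j : ℕ) + 1, hj⟩ := hj2.symm
      rw [e1, e2, Equiv.symm_apply_apply, Equiv.symm_apply_apply]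
    have step : ∀ m : ℕ, ∀ hm : m < k,
        ((σ.symm (c ⟨m, hm⟩) : Fin _) : ℕ) = ((σ.symm (c ⟨0, hk⟩) : Fin _) : ℕ) + m := by
      intro m
      induction m with
      | zero => intro hm; simp
      | succ m ih =>
        intro hm
        have hm' : m < k := by omega
        have := key ⟨m, hm'⟩
        have hmod : ((⟨m, hm'⟩ : Fin k) : ℕ) + 1 = m + 1 := rfl
        rw [hmod] at this
        have hmk : (m + 1) % k = m + 1 := Nat.mod_eq_of_lt hm
        simp only [hmk] at this
        rw [this, ih hm']
        omega
    have hlast := key ⟨k - 1, by omega⟩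
    have h1 : ((⟨k - 1, by omega⟩ : Fin k) : ℕ) + 1 = k - 1 + 1 := rfl
    rw [h1] at hlast
    have h2 : (k - 1 + 1) % k = 0 := by
      have : k - 1 + 1 = k := by omega
      rw [this, Nat.mod_self]
    simp only [h2] at hlast
    have := step (k - 1) (by omega)
    omega
open Finset
open scoped Classical

section
variable {V : Type*} [Fintype V] [DecidableEq V]

lemma count_eq_sum (E' : Finset (V × V)) (f : V → ℕ+) :
    (redeiBergeCount (E' : Set (V × V)) f : ℤ) =
      ∑ σ : Fin (Fintype.card V) ≃ V, if Friendly (E' : Set (V × V)) f σ then 1 else 0 := by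
  classical
  rw [redeiBergeCount, Nat.card_eq_fintype_card, Fintype.card_subtype, Finset.card_filter]
  push_cast
  rfl

lemma per_sigma (E F : Finset (V × V)) (hFE : F ⊆ E)
    (hF : ¬ IsDisjointUnionOfPaths (F : Set (V × V))) (f : V → ℕ+)
    (σ : Fin (Fintype.card V) ≃ V) :
    (if Friendly (E : Set (V × V)) f σ then (1 : ℤ) else 0) =
      ∑ S ∈ F.powerset.erase ∅, (-1 : ℤ) ^ (S.card - 1) *
        (if Friendly ((E \ S : Finset (V × V)) : Set (V × V)) f σ then 1 else 0) := by
  classical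
  have hzero : ∑ S ∈ F.powerset, (-1 : ℤ) ^ S.card *
      (if Friendly ((E \ S : Finset (V × V)) : Set (V × V)) f σ then 1 else 0) = 0 := by
    by_cases hm : Monotone (fun i => f (σ i))
    · set B : Finset (V × V) := E.filter (fun e => ∃ i : Fin (Fintype.card V),
        ∃ hh : (i : ℕ) + 1 < Fintype.card V,
          σ i = e.1 ∧ σ ⟨(i : ℕ) + 1, hh⟩ = e.2 ∧ f e.1 = f e.2) with hB
      have hiff : ∀ S ∈ F.powerset,
          (Friendly ((E \ S : Finset (V × V)) : Set (V × V)) f σ ↔ B ⊆ S) := by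
        intro S hS
        constructor
        · rintro ⟨-, h2⟩ e he
          rw [hB, Finset.mem_filter] at he
          obtain ⟨heE, i, hh, h1, h2', h3⟩ := he
          by_contra heS
          have hmem : (σ i, σ ⟨(i : ℕ) + 1, hh⟩) ∈ ((E \ S : Finset (V × V)) : Set (V × V)) := by
            rw [h1, h2']
            simp [Finset.mem_sdiff, heE, heS]
          have := h2 i hh hmem
          rw [h1, h2', h3] at this
          exact lt_irrefl _ this
        · intro hBS
          refine ⟨hm, ?_⟩
          intro i hh hmem
          rw [Finset.mem_coe, Finset.mem_sdiff] at hmem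
          obtain ⟨hE, hSmem⟩ := hmem
          have hle : f (σ i) ≤ f (σ ⟨(i : ℕ) + 1, hh⟩) :=
            hm (Fin.le_def.mpr (by simp))
          rcases lt_or_eq_of_le hle with h | h
          · exact h
          · exact absurd (hBS (Finset.mem_filter.mpr ⟨hE, ⟨i, hh, rfl, rfl, h⟩⟩)) hSmem
      rw [Finset.sum_congr rfl (fun S hS => by rw [if_congr (hiff S hS) rfl rfl])]
      by_cases hBF : B ⊆ F
      · have hBne : B ≠ F := by
          intro hBFeq
          apply hF
          apply aux_paths F σ
          intro e he
          rw [← hBFeq, hB, Finset.mem_filter] at he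
          obtain ⟨-, i, hh, h1, h2, -⟩ := he
          exact ⟨i, hh, h1, h2⟩
        have h1 : ∑ S ∈ F.powerset, (-1 : ℤ) ^ S.card * (if B ⊆ S then 1 else 0)
            = ∑ S ∈ F.powerset.filter (fun S => B ⊆ S), (-1 : ℤ) ^ S.card := by
          rw [Finset.sum_filter]
          exact Finset.sum_congr rfl (fun S _ => by split <;> simp
            )
        have h2 : ∑ S ∈ F.powerset.filter (fun S => B ⊆ S), (-1 : ℤ) ^ S.card
            = ∑ T ∈ (F \ B).powerset, (-1 : ℤ) ^ (B.card + T.card) := by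
          refine Finset.sum_nbij' (fun S => S \ B) (fun T => B ∪ T) ?_ ?_ ?_ ?_ ?_
          · intro S hS
            rw [Finset.mem_filter, Finset.mem_powerset] at hS
            exact Finset.mem_powerset.mpr (Finset.sdiff_subset_sdiff hS.1 le_rfl)
          · intro T hT
            rw [Finset.mem_powerset] at hT
            rw [Finset.mem_filter, Finset.mem_powerset]
            exact ⟨Finset.union_subset hBF (hT.trans (Finset.sdiff_subset)),
              Finset.subset_union_left⟩
          · intro S hS
            rw [Finset.mem_filter] at hS
            exact Finset.union_sdiff_of_subset hS.2
          · intro T hT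
            rw [Finset.mem_powerset] at hT
            refine Finset.union_sdiff_cancel_left ?_
            exact Finset.disjoint_left.mpr
              (fun a haB haT => (Finset.mem_sdiff.mp (hT haT)).2 haB)
          · intro S hS
            rw [Finset.mem_filter] at hS
            congr 1
            rw [Finset.card_sdiff_of_subset hS.2]
            have := Finset.card_le_card hS.2
            omega
        rw [h1, h2]
        have h3 : ∀ T ∈ (F \ B).powerset,
            (-1 : ℤ) ^ (B.card + T.card) = (-1 : ℤ) ^ B.card * (-1 : ℤ) ^ T.card :=
          fun T _ => pow_add _ _ _
        rw [Finset.sum_congr rfl h3, ← Finset.mul_sum,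
          Finset.sum_powerset_neg_one_pow_card_of_nonempty, mul_zero]
        rw [Finset.sdiff_nonempty]
        intro hFB
        exact hBne (Finset.Subset.antisymm hBF hFB)
      · apply Finset.sum_eq_zero
        intro S hS
        rw [if_neg (fun hBS => hBF (hBS.trans (Finset.mem_powerset.mp hS))), mul_zero]
    · apply Finset.sum_eq_zero
      intro S hS
      rw [if_neg (fun hfr => hm hfr.1), mul_zero]
  have hins : F.powerset = insert ∅ (F.powerset.erase ∅) :=
    (Finset.insert_erase (Finset.empty_mem_powerset F)).symm
  rw [hins, Finset.sum_insert (Finset.notMem_erase _ _)] at hzero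
  have hempty : ((-1 : ℤ) ^ (∅ : Finset (V × V)).card *
      (if Friendly ((E \ (∅ : Finset (V × V)) : Finset (V × V)) : Set (V × V)) f σ then 1 else 0))
      = (if Friendly (E : Set (V × V)) f σ then (1 : ℤ) else 0) := by
    rw [Finset.sdiff_empty]
    simp
  rw [hempty] at hzero
  have hneg : ∑ S ∈ F.powerset.erase ∅, (-1 : ℤ) ^ S.card *
      (if Friendly ((E \ S : Finset (V × V)) : Set (V × V)) f σ then 1 else 0)
      = - ∑ S ∈ F.powerset.erase ∅, (-1 : ℤ) ^ (S.card - 1) *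
        (if Friendly ((E \ S : Finset (V × V)) : Set (V × V)) f σ then 1 else 0) := by
    rw [← Finset.sum_neg_distrib]
    refine Finset.sum_congr rfl (fun S hS => ?_)
    have hSne : S ≠ ∅ := Finset.ne_of_mem_erase hS
    have hc : S.card ≠ 0 := fun h => hSne (Finset.card_eq_zero.mp h)
    obtain ⟨m, hm⟩ : ∃ m, S.card = m + 1 := ⟨S.card - 1, by omega⟩
    rw [hm, Nat.add_sub_cancel, pow_succ]
    ring
  rw [hneg] at hzero
  linarith

end

/-- If `X = (V, E)` is a digraph and `F ⊆ E` is such that `(V, F)` is not a disjoint union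
of directed paths, then for every coloring `f`:
`N(f, X) = Σ_{∅ ≠ S ⊆ F} (−1)^{|S|−1} N(f, X∖S)`. -/
theorem redeiBergeCount_subset_decomposition {V : Type*} [Fintype V] [DecidableEq V]
    (E F : Finset (V × V)) (hFE : F ⊆ E)
    (hF : ¬ IsDisjointUnionOfPaths (F : Set (V × V))) (f : V → ℕ+) :
    (redeiBergeCount (E : Set (V × V)) f : ℤ) =
      ∑ S ∈ F.powerset.erase ∅,
        (-1 : ℤ) ^ (S.card - 1) * (redeiBergeCount ((E \ S : Finset (V × V)) : Set (V × V)) f : ℤ) := by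
  rw [count_eq_sum]
  have hterm : ∀ S ∈ F.powerset.erase ∅,
      (-1 : ℤ) ^ (S.card - 1) * (redeiBergeCount ((E \ S : Finset (V × V)) : Set (V × V)) f : ℤ)
        = ∑ σ : Fin (Fintype.card V) ≃ V, (-1 : ℤ) ^ (S.card - 1) *
          (if Friendly ((E \ S : Finset (V × V)) : Set (V × V)) f σ then 1 else 0) := by
    intro S _
    rw [count_eq_sum, Finset.mul_sum]
  rw [Finset.sum_congr rfl hterm, Finset.sum_comm]
  exact Finset.sum_congr rfl (fun σ _ => per_sigma E F hFE hF f σ)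
end

section
/- If X = (V, E) is a digraph that is not a disjoint union of directed paths, then for every coloring f : V → ℤ⁺: N(f, X) = Σ_{S ⊆ E, S ≠ ∅} (−1)^{|S|−1} N(f, X∖S), where X∖S = (V, E∖S). (Equivalently, W_X = Σ_{S ⊆ E, S ≠ ∅} (−1)^{|S|−1} W_{X∖S}.) -/
open Finset

theorem Finset.sum_Icc_neg_one_pow_card_of_ssubset {α : Type*} [DecidableEq α]
    {s t : Finset α} (h : s ⊂ t) : ∑ u ∈ Icc s t, (-1 : ℤ) ^ #u = 0 := by
  have hdisj : ∀ r ∈ (t \ s).powerset, Disjoint s r := fun r hr =>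
    disjoint_of_subset_right (mem_powerset.1 hr) disjoint_sdiff
  rw [Icc_eq_image_powerset h.subset, sum_image fun r hr r' hr' hrr' => by
    simpa [union_sdiff_cancel_left (hdisj r hr), union_sdiff_cancel_left (hdisj r' hr')]
      using congrArg (· \ s) hrr']
  calc ∑ r ∈ (t \ s).powerset, (-1 : ℤ) ^ #(s ∪ r)
      = ∑ r ∈ (t \ s).powerset, (-1 : ℤ) ^ #s * (-1) ^ #r :=
        sum_congr rfl fun r hr => by rw [card_union_of_disjoint (hdisj r hr), pow_add]
    _ = 0 := by
        rw [← mul_sum, sum_powerset_neg_one_pow_card_of_nonempty (sdiff_nonempty.2 h.not_subset),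
          mul_zero]

theorem Finset.sum_nonempty_superset_neg_one_pow_card_sub_one {α : Type*} [DecidableEq α]
    {s t : Finset α} (h : s ⊂ t) :
    ∑ u ∈ t.powerset.erase ∅, (if s ⊆ u then (-1 : ℤ) ^ (#u - 1) else 0) =
      if s = ∅ then 1 else 0 := by
  have hpred : ∀ u : Finset α, u ≠ ∅ →
      (-1 : ℤ) ^ (#u - 1) = (if u = ∅ then 1 else 0) - (-1) ^ #u := by
    intro u hu
    obtain ⟨k, hk⟩ := Nat.exists_eq_add_of_lt (card_pos.2 (nonempty_iff_ne_empty.2 hu))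
    simp [hu, hk, pow_succ]
  calc ∑ u ∈ t.powerset.erase ∅, (if s ⊆ u then (-1 : ℤ) ^ (#u - 1) else 0)
      = ∑ u ∈ t.powerset.erase ∅,
          if s ⊆ u then (if u = ∅ then 1 else 0) - (-1 : ℤ) ^ #u else 0 :=
        sum_congr rfl fun u hu => by rw [hpred u (ne_of_mem_erase hu)]
    _ = ∑ u ∈ t.powerset, if s ⊆ u then (if u = ∅ then 1 else 0) - (-1 : ℤ) ^ #u else 0 :=
        sum_erase _ (by simp)
    _ = ∑ u ∈ Icc s t, ((if u = ∅ then 1 else 0) - (-1 : ℤ) ^ #u) := by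
        rw [← sum_filter, Icc_eq_filter_powerset]
    _ = if s = ∅ then 1 else 0 := by
        rw [sum_sub_distrib, sum_ite_eq', sum_Icc_neg_one_pow_card_of_ssubset h, sub_zero]
        simp [subset_empty]

theorem isDisjointUnionOfPaths_of_injective {V : Type*} {F : Set (V × V)} (r : V → ℕ)
    (hr : Function.Injective r) (hF : ∀ u v, (u, v) ∈ F → r v = r u + 1) :
    IsDisjointUnionOfPaths F := by
  refine ⟨fun u v w huv huw => hr ?_, fun u v w huw hvw => hr ?_, ?_⟩
  · rw [hF _ _ huv, hF _ _ huw]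
  · have := (hF _ _ huw).symm.trans (hF _ _ hvw)
    omega
  · rintro ⟨k, hk, c, -, hc⟩
    obtain ⟨i, -, hmax⟩ := exists_max_image univ (fun i => r (c i)) ⟨⟨0, hk⟩, mem_univ _⟩
    have := hmax _ (mem_univ ⟨(i + 1) % k, Nat.mod_lt _ hk⟩)
    rw [hF _ _ (hc i)] at this
    omega

section Listing

variable {V : Type*} [Fintype V]

open Classical in
theorem natCast_redeiBergeCount_eq_sum {R : Type*} [AddCommMonoidWithOne R]
    (E : Set (V × V)) (f : V → ℕ+) :
    (redeiBergeCount E f : R) =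
      ∑ σ : Fin (Fintype.card V) ≃ V, if Friendly E f σ then 1 else 0 := by
  rw [sum_boole, redeiBergeCount, Nat.card_eq_fintype_card, Fintype.card_subtype]

variable [DecidableEq V]

def violatedEdges (E : Finset (V × V)) (f : V → ℕ+) (σ : Fin (Fintype.card V) ≃ V) :
    Finset (V × V) :=
  {e ∈ E | ∃ i : Fin (Fintype.card V), ∃ h : (i : ℕ) + 1 < Fintype.card V,
    e = (σ i, σ ⟨i + 1, h⟩) ∧ ¬ f (σ i) < f (σ ⟨i + 1, h⟩)}

theorem violatedEdges_subset (E : Finset (V × V)) (f : V → ℕ+)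
    (σ : Fin (Fintype.card V) ≃ V) : violatedEdges E f σ ⊆ E :=
  filter_subset _ _

theorem friendly_sdiff_iff {E : Finset (V × V)} {f : V → ℕ+} {σ : Fin (Fintype.card V) ≃ V}
    (S : Finset (V × V)) :
    Friendly ((E \ S : Finset (V × V)) : Set (V × V)) f σ ↔
      Monotone (fun i => f (σ i)) ∧ violatedEdges E f σ ⊆ S := by
  simp only [Friendly, coe_sdiff, Set.mem_sdiff, mem_coe, violatedEdges, subset_iff, mem_filter]
  refine and_congr_right fun _ => ⟨?_, ?_⟩
  · rintro hlt e ⟨he, i, h, rfl, hnlt⟩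
    by_contra heS
    exact hnlt (hlt i h ⟨he, heS⟩)
  · intro hS i h ⟨he, heS⟩
    by_contra hnlt
    exact heS (hS ⟨he, i, h, rfl, hnlt⟩)

theorem friendly_iff {E : Finset (V × V)} {f : V → ℕ+} {σ : Fin (Fintype.card V) ≃ V} :
    Friendly (E : Set (V × V)) f σ ↔ Monotone (fun i => f (σ i)) ∧ violatedEdges E f σ = ∅ := by
  simpa [subset_empty] using friendly_sdiff_iff (E := E) (f := f) (σ := σ) ∅

theorem violatedEdges_ne_self {E : Finset (V × V)}
    (hE : ¬ IsDisjointUnionOfPaths (E : Set (V × V))) (f : V → ℕ+)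
    (σ : Fin (Fintype.card V) ≃ V) : violatedEdges E f σ ≠ E := by
  intro h
  refine hE (isDisjointUnionOfPaths_of_injective (fun v => σ.symm v)
    (Fin.val_injective.comp σ.symm.injective) fun u v huv => ?_)
  rw [mem_coe, ← h] at huv
  obtain ⟨-, i, hi, heq, -⟩ := mem_filter.1 huv
  obtain ⟨rfl, rfl⟩ := Prod.mk.inj heq
  simp

open Classical in
theorem ite_friendly_eq_sum_sdiff {E : Finset (V × V)}
    (hE : ¬ IsDisjointUnionOfPaths (E : Set (V × V))) (f : V → ℕ+)
    (σ : Fin (Fintype.card V) ≃ V) :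
    (if Friendly (E : Set (V × V)) f σ then 1 else 0 : ℤ) =
      ∑ S ∈ E.powerset.erase ∅, (-1 : ℤ) ^ (#S - 1) *
        if Friendly ((E \ S : Finset (V × V)) : Set (V × V)) f σ then 1 else 0 := by
  by_cases hmono : Monotone (fun i => f (σ i))
  · simp only [friendly_sdiff_iff, hmono, true_and, mul_ite, mul_one, mul_zero]
    rw [friendly_iff, and_iff_right hmono]
    convert (sum_nonempty_superset_neg_one_pow_card_sub_one
      ((violatedEdges_subset E f σ).ssubset_of_ne (violatedEdges_ne_self hE f σ))).symm using 2
  · simp only [friendly_sdiff_iff, hmono, false_and, if_false, mul_zero, sum_const_zero]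
    rw [if_neg fun h => hmono (friendly_iff.1 h).1]

end Listing

/-- If `X = (V, E)` is a digraph that is not a disjoint union of directed paths, then for
every coloring `f`: `N(f, X) = Σ_{∅ ≠ S ⊆ E} (−1)^{|S|−1} N(f, X∖S)`. -/
theorem redeiBergeCount_decomposition {V : Type*} [Fintype V] [DecidableEq V]
    (E : Finset (V × V))
    (hE : ¬ IsDisjointUnionOfPaths (E : Set (V × V))) (f : V → ℕ+) :
    (redeiBergeCount (E : Set (V × V)) f : ℤ) =
      ∑ S ∈ E.powerset.erase ∅,
        (-1 : ℤ) ^ (S.card - 1) * (redeiBergeCount ((E \ S : Finset (V × V)) : Set (V × V)) f : ℤ) := by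
  simp only [natCast_redeiBergeCount_eq_sum, mul_sum]
  rw [sum_comm]
  exact sum_congr rfl fun σ _ => ite_friendly_eq_sum_sdiff hE f σ
end
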